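/- arXiv:math/0212016 — 5 statements merged into one kernel-verified Lean document; each statement's English description precedes it below -/
import Mathlib

section
/- Let G be a group and g an element of G such that [g,x,g,x] = 1 for all x in G. Then the normal closure of the cyclic subgroup ⟨g⟩ inside the group ⟨g⟩^G is abelian; in particular, g lies in the Hirsch–Plotkin radical of G. -/
set_option maxHeartbeats 1000000


/-- Commutator `[a,b] = a⁻¹b⁻¹ab`. -/
def gcomm {G : Type*} [Group G] (a b : G) : G := a⁻¹ * b⁻¹ * a * b

/-- Left-normed iterated commutator `[x, ₙ y]`. -/
def engelComm {G : Type*} [Group G] (x y : G) : ℕ → G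
  | 0 => x
  | n + 1 => gcomm (engelComm x y n) y

/-- A group is locally nilpotent if every finitely generated subgroup is nilpotent. -/
def IsLocallyNilpotent (G : Type*) [Group G] : Prop :=
  ∀ H : Subgroup G, H.FG → Group.IsNilpotent H

/-- The Hirsch–Plotkin radical: the subgroup generated by all normal locally
nilpotent subgroups of `G`. -/
def HirschPlotkinRadical (G : Type*) [Group G] : Subgroup G :=
  Subgroup.closure (⋃ H ∈ {H : Subgroup G | H.Normal ∧ IsLocallyNilpotent H}, (H : Set G))


namespace HeinekenAux

variable {G : Type*} [Group G]

variable {G : Type*} [Group G]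

lemma gcomm_eq_one_iff_commute {a b : G} : gcomm a b = 1 ↔ Commute a b := by
  unfold gcomm
  constructor
  · intro h
    show a * b = b * a
    calc a*b = (b*a) * (a⁻¹*b⁻¹*a*b) := by group
    _ = b*a := by rw [h]; group
  · intro h
    rw [show a⁻¹ * b⁻¹ * a * b = a⁻¹ * b⁻¹ * (a * b) by group, h.eq]
    group

lemma commute_conj {a b : G} (h : Commute a b) (c : G) :
    Commute (c * a * c⁻¹) (c * b * c⁻¹) := by
  have h' := h.eq
  show _ = _
  calc (c*a*c⁻¹)*(c*b*c⁻¹) = c*(a*b)*c⁻¹ := by group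
  _ = c*(b*a)*c⁻¹ := by rw [h']
  _ = (c*b*c⁻¹)*(c*a*c⁻¹) := by group

lemma commute_of_conj {a b c : G} (h : Commute (c * a * c⁻¹) (c * b * c⁻¹)) :
    Commute a b := by
  have h2 := commute_conj h c⁻¹
  have e1 : c⁻¹ * (c*a*c⁻¹) * c⁻¹⁻¹ = a := by group
  have e2 : c⁻¹ * (c*b*c⁻¹) * c⁻¹⁻¹ = b := by group
  rwa [e1, e2] at h2

section core

variable (g : G) (hg : ∀ x : G, gcomm (gcomm (gcomm g x) g) x = 1)

/-- `d x = [[g,x],g]`. -/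
def dd (x : G) : G := gcomm (gcomm g x) g

variable {g}

include hg

lemma dcomm_self (x : G) : Commute (dd g x) x :=
  gcomm_eq_one_iff_commute.mp (hg x)

lemma dcomm_g (x : G) : Commute (dd g x) g := by
  have e : gcomm (gcomm g (g * x)) g = dd g x := by unfold dd gcomm; group
  have h2 : Commute (dd g x) (g * x) := by
    have := gcomm_eq_one_iff_commute.mp (hg (g * x)); rwa [e] at this
  have := h2.mul_right (dcomm_self hg x).inv_right
  simpa using this

lemma dcomm_centralizer {h : G} (hc : Commute g h) (x : G) : Commute (dd g x) h := by
  have e1 : gcomm g (x * h) = gcomm g h * (h⁻¹ * gcomm g x * h) := by unfold gcomm; group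
  rw [gcomm_eq_one_iff_commute.mpr hc, one_mul] at e1
  have e2 : gcomm (gcomm g (x * h)) g = h⁻¹ * dd g x * h := by
    rw [e1]
    have w2 : gcomm (h⁻¹ * gcomm g x * h) g = h⁻¹ * gcomm (gcomm g x) (h * g * h⁻¹) * h := by
      unfold gcomm; group
    have hg' : h * g * h⁻¹ = g := by rw [← hc.eq]; group
    rw [w2, hg']; rfl
  have h3 : Commute (h⁻¹ * dd g x * h) (x * h) := by
    have := gcomm_eq_one_iff_commute.mp (hg (x * h)); rwa [e2] at this
  have e3 : h⁻¹ * dd g x * h⁻¹⁻¹ = h⁻¹ * dd g x * h := by group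
  have e4 : h⁻¹ * (h * x) * h⁻¹⁻¹ = x * h := by group
  rw [← e3, ← e4] at h3
  have h4 : Commute (dd g x) (h * x) := commute_of_conj h3
  have := h4.mul_right (dcomm_self hg x).inv_right
  simpa using this

end core

section core2
variable {g : G} (hg : ∀ x : G, gcomm (gcomm (gcomm g x) g) x = 1)
include hg

-- main induction
lemma conj_comm_of_mem {h : G} (hh : h ∈ Subgroup.normalClosure ({g} : Set G)) :
    Commute g (h⁻¹ * g * h) := by
  have hh' : h ∈ Subgroup.closure (Group.conjugatesOfSet ({g} : Set G)) := hh
  clear hh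
  induction hh' using Subgroup.closure_induction_left with
  | one => simpa using Commute.refl g
  | mul_left z hz y hy ih =>
      obtain ⟨a, ha, hconj⟩ := Group.mem_conjugatesOfSet_iff.mp hz
      have hconj' : IsConj g z := (Set.mem_singleton_iff.mp ha) ▸ hconj
      obtain ⟨c, rfl⟩ := isConj_iff.mp hconj'
      have h1 := commute_conj ih y
      rw [show y * (y⁻¹ * g * y) * y⁻¹ = g by group] at h1
      have h2 : Commute (dd g c⁻¹) (y * g * y⁻¹) := dcomm_centralizer hg h1.symm c⁻¹
      have h3 := commute_conj h2 y⁻¹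
      rw [show y⁻¹ * (y * g * y⁻¹) * y⁻¹⁻¹ = g by group,
          show y⁻¹ * dd g c⁻¹ * y⁻¹⁻¹ = y⁻¹ * dd g c⁻¹ * y by group] at h3
      have h4 : Commute g (y⁻¹ * (dd g c⁻¹)⁻¹ * y) := by
        have := h3.symm.inv_right
        rwa [show (y⁻¹ * dd g c⁻¹ * y)⁻¹ = y⁻¹ * (dd g c⁻¹)⁻¹ * y by group] at this
      have E1 : (c*g*c⁻¹*y)⁻¹ * g * (c*g*c⁻¹*y) = (y⁻¹*g*y) * (y⁻¹ * (dd g c⁻¹)⁻¹ * y) := by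
        unfold dd gcomm; group
      rw [E1]
      exact ih.mul_right h4
  | inv_mul_cancel z hz y hy ih =>
      obtain ⟨a, ha, hconj⟩ := Group.mem_conjugatesOfSet_iff.mp hz
      have hconj' : IsConj g z := (Set.mem_singleton_iff.mp ha) ▸ hconj
      obtain ⟨c, rfl⟩ := isConj_iff.mp hconj'
      have h1 := commute_conj ih y
      rw [show y * (y⁻¹ * g * y) * y⁻¹ = g by group] at h1
      have h2 : Commute (dd g c⁻¹) (y * g * y⁻¹) := dcomm_centralizer hg h1.symm c⁻¹
      have h3 := commute_conj h2 y⁻¹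
      rw [show y⁻¹ * (y * g * y⁻¹) * y⁻¹⁻¹ = g by group,
          show y⁻¹ * dd g c⁻¹ * y⁻¹⁻¹ = y⁻¹ * dd g c⁻¹ * y by group] at h3
      have h4 : Commute g (y⁻¹ * dd g c⁻¹ * y) := h3.symm
      have hdc : Commute (dd g c⁻¹) c := by simpa using (dcomm_self hg c⁻¹).inv_right
      have hcz : Commute (dd g c⁻¹) (c * g * c⁻¹) :=
        (hdc.mul_right (dcomm_g hg c⁻¹)).mul_right hdc.inv_right
      have ez : (c*g*c⁻¹) * dd g c⁻¹ * (c*g*c⁻¹)⁻¹ = dd g c⁻¹ := by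
        rw [← hcz.eq]; group
      have E2 : ((c*g*c⁻¹)⁻¹*y)⁻¹ * g * ((c*g*c⁻¹)⁻¹*y)
          = (y⁻¹*g*y) * (y⁻¹ * ((c*g*c⁻¹) * dd g c⁻¹ * (c*g*c⁻¹)⁻¹) * y) := by
        unfold dd gcomm; group
      rw [E2, ez]
      exact ih.mul_right h4

lemma conj_conj_comm {h k : G} (hh : h ∈ Subgroup.normalClosure ({g} : Set G))
    (hk : k ∈ Subgroup.normalClosure ({g} : Set G)) :
    Commute (h⁻¹ * g * h) (k⁻¹ * g * k) := by
  have hm : k * h⁻¹ ∈ Subgroup.normalClosure ({g} : Set G) := mul_mem hk (inv_mem hh)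
  have h1 := conj_comm_of_mem hg hm
  have h2 := commute_conj h1 h⁻¹
  rwa [show h⁻¹ * g * h⁻¹⁻¹ = h⁻¹ * g * h by group,
    show h⁻¹ * ((k * h⁻¹)⁻¹ * g * (k * h⁻¹)) * h⁻¹⁻¹ = k⁻¹ * g * k by group] at h2

end core2

lemma closure_commute {s : Set G} (hs : ∀ a ∈ s, ∀ b ∈ s, Commute a b) :
    ∀ a ∈ Subgroup.closure s, ∀ b ∈ Subgroup.closure s, Commute a b := by
  have step1 : ∀ a ∈ s, ∀ b ∈ Subgroup.closure s, Commute a b := by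
    intro a ha b hb
    induction hb using Subgroup.closure_induction with
    | mem x hx => exact hs a ha x hx
    | one => exact Commute.one_right a
    | mul x y _ _ hx hy => exact hx.mul_right hy
    | inv x _ hx => exact hx.inv_right
  intro a ha b hb
  induction ha using Subgroup.closure_induction with
  | mem x hx => exact step1 x hx b hb
  | one => exact Commute.one_left b
  | mul x y _ _ hx hy => exact hx.mul_left hy
  | inv x _ hx => exact hx.inv_left

/-- conjugates of `u` by elements of the normal closure of `g`. -/
def KK (g u : G) : Subgroup G :=
  Subgroup.closure {v | ∃ h ∈ Subgroup.normalClosure ({g} : Set G), v = h⁻¹ * u * h}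

lemma mem_KK_self (g u : G) : u ∈ KK g u :=
  Subgroup.subset_closure ⟨1, one_mem _, by group⟩

lemma KK_le_N {g u : G} (hu : u ∈ Subgroup.normalClosure ({g} : Set G)) :
    KK g u ≤ Subgroup.normalClosure ({g} : Set G) := by
  apply Subgroup.closure_le _ |>.mpr
  rintro v ⟨h, hh, rfl⟩
  exact mul_mem (mul_mem (inv_mem hh) hu) hh

lemma KK_commute {g u : G} (hu : ∀ x : G, gcomm (gcomm (gcomm u x) u) x = 1)
    (hN : Subgroup.normalClosure ({g} : Set G) ≤ Subgroup.normalClosure ({u} : Set G)) :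
    ∀ a ∈ KK g u, ∀ b ∈ KK g u, Commute a b := by
  apply closure_commute
  rintro a ⟨h, hh, rfl⟩ b ⟨k, hk, rfl⟩
  exact conj_conj_comm hu (hN hh) (hN hk)

lemma KK_conj_stable {g u n v : G} (hn : n ∈ Subgroup.normalClosure ({g} : Set G))
    (hv : v ∈ KK g u) : n * v * n⁻¹ ∈ KK g u := by
  induction hv using Subgroup.closure_induction with
  | mem x hx =>
      obtain ⟨h, hh, rfl⟩ := hx
      refine Subgroup.subset_closure ⟨h * n⁻¹, mul_mem hh (inv_mem hn), by group⟩
  | one => simpa using one_mem _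
  | mul x y _ _ hx hy =>
      have : n * (x * y) * n⁻¹ = (n * x * n⁻¹) * (n * y * n⁻¹) := by group
      rw [this]; exact mul_mem hx hy
  | inv x _ hx =>
      have : n * x⁻¹ * n⁻¹ = (n * x * n⁻¹)⁻¹ := by group
      rw [this]; exact inv_mem hx

-- Part 1 final assembly
theorem part1 {g : G} (hg : ∀ x : G, gcomm (gcomm (gcomm g x) g) x = 1) :
    ∀ a b : Subgroup.normalClosure
        ({⟨g, Subgroup.subset_normalClosure (Set.mem_singleton g)⟩} :
          Set ↥(Subgroup.normalClosure ({g} : Set G))),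
        a * b = b * a := by
  set N := Subgroup.normalClosure ({g} : Set G) with hN
  set gN : ↥N := ⟨g, Subgroup.subset_normalClosure (Set.mem_singleton g)⟩ with hgN
  let K'' : Subgroup ↥N := (KK g g).comap N.subtype
  haveI hnormal : K''.Normal := by
    constructor
    intro x hx n
    have : (n : G) * (x : G) * (n : G)⁻¹ ∈ KK g g := KK_conj_stable n.2 hx
    simpa [K'', Subgroup.mem_comap, Subgroup.mem_subgroupOf] using this
  have hle : Subgroup.normalClosure ({gN} : Set ↥N) ≤ K'' := by
    apply Subgroup.normalClosure_le_normal
    intro x hx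
    rw [Set.mem_singleton_iff] at hx
    subst hx
    simpa [K'', Subgroup.mem_comap, Subgroup.mem_subgroupOf] using mem_KK_self g g
  intro a b
  have ha : ((a : ↥N) : G) ∈ KK g g := hle a.2
  have hb : ((b : ↥N) : G) ∈ KK g g := hle b.2
  have hc : Commute ((a : ↥N) : G) ((b : ↥N) : G) :=
    KK_commute hg (le_refl _) _ ha _ hb
  exact Subtype.ext (Subtype.ext hc)

private def Jsub {Γ : Type*} [Group Γ] {ι : Type*} (B : ι → Subgroup Γ) (k : ℕ) : Subgroup Γ :=
  ⨆ S : {S : Finset ι // S.card = k}, ⨅ i ∈ S.1, B i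

set_option maxHeartbeats 1000000 in
open scoped commutatorElement in
lemma fitting_abelian {Γ : Type*} [Group Γ] {ι : Type*} [Fintype ι] (B : ι → Subgroup Γ)
    (hnorm : ∀ i, (B i).Normal)
    (hab : ∀ i, ∀ a ∈ B i, ∀ b ∈ B i, Commute a b)
    (htop : (⨆ i, B i) = (⊤ : Subgroup Γ)) : Group.IsNilpotent Γ := by
  classical
  set J : ℕ → Subgroup Γ := Jsub B with hJ
  have hJmem : ∀ k (S : {S : Finset ι // S.card = k}) x, x ∈ (⨅ i ∈ S.1, B i) → x ∈ J k :=
    fun k S x hx => Subgroup.mem_iSup_of_mem S hx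
  have hinf_norm : ∀ S : Finset ι, (⨅ i ∈ S, B i).Normal := by
    intro S
    constructor
    intro n hn t
    simp only [Subgroup.mem_iInf] at hn ⊢
    intro i hi
    exact (hnorm i).conj_mem _ (hn i hi) t
  have hJnorm : ∀ k, (J k).Normal := by
    intro k
    constructor
    intro n hn t
    refine Subgroup.iSup_induction (C := fun m => ∀ t : Γ, t * m * t⁻¹ ∈ J k) _ hn ?_ ?_ ?_ t
    · intro S x hx t
      exact hJmem k S _ ((hinf_norm S.1).conj_mem x hx t)
    · intro t; simpa using one_mem _
    · intro x y hx hy t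
      have : t * (x * y) * t⁻¹ = (t * x * t⁻¹) * (t * y * t⁻¹) := by group
      rw [this]; exact mul_mem (hx t) (hy t)
  have hstep : ∀ k, ⁅J k, (⊤ : Subgroup Γ)⁆ ≤ J (k + 1) := by
    intro k
    rw [Subgroup.commutator_le]
    intro p hp q hq
    rw [← htop] at hq
    refine Subgroup.iSup_induction
      (C := fun p => ∀ q ∈ (⨆ j, B j), ⁅p, q⁆ ∈ J (k+1)) _ hp ?_ ?_ ?_ q hq
    · -- p in one of the infs
      intro S p hpS q hq
      refine Subgroup.iSup_induction (C := fun q => ⁅p, q⁆ ∈ J (k+1)) _ hq ?_ ?_ ?_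
      · intro j q hqj
        by_cases hjS : j ∈ S.1
        · have hpj : p ∈ B j := by
            simp only [Subgroup.mem_iInf] at hpS; exact hpS j hjS
          have : ⁅p, q⁆ = 1 := commutatorElement_eq_one_iff_commute.mpr (hab j p hpj q hqj)
          rw [this]; exact one_mem _
        · have hmem : ⁅p, q⁆ ∈ ⨅ i ∈ insert j S.1, B i := by
            simp only [Subgroup.mem_iInf, commutatorElement_def]
            intro i hi
            rcases Finset.mem_insert.mp hi with rfl | hiS
            · have h1 : p * q * p⁻¹ ∈ B i := (hnorm i).conj_mem q hqj p
              exact mul_mem h1 (inv_mem hqj)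
            · have hpi : p ∈ B i := by
                simp only [Subgroup.mem_iInf] at hpS; exact hpS i hiS
              have h2 : q * p⁻¹ * q⁻¹ ∈ B i := (hnorm i).conj_mem p⁻¹ (inv_mem hpi) q
              have : p * q * p⁻¹ * q⁻¹ = p * (q * p⁻¹ * q⁻¹) := by group
              rw [this]; exact mul_mem hpi h2
          have hcard : (insert j S.1).card = k + 1 := by
            rw [Finset.card_insert_of_notMem hjS, S.2]
          exact hJmem (k+1) ⟨insert j S.1, hcard⟩ _ hmem
      · simpa using one_mem _
      · intro q₁ q₂ h1 h2
        have : ⁅p, q₁ * q₂⁆ = ⁅p, q₁⁆ * (q₁ * ⁅p, q₂⁆ * q₁⁻¹) := by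
          simp only [commutatorElement_def]; group
        rw [this]
        exact mul_mem h1 ((hJnorm (k+1)).conj_mem _ h2 q₁)
    · intro q _; simpa using one_mem _
    · intro p₁ p₂ h1 h2 q hq
      have : ⁅p₁ * p₂, q⁆ = (p₁ * ⁅p₂, q⁆ * p₁⁻¹) * ⁅p₁, q⁆ := by
        simp only [commutatorElement_def]; group
      rw [this]
      exact mul_mem ((hJnorm (k+1)).conj_mem _ (h2 q hq) p₁) (h1 q hq)
  have hlcs : ∀ k, Subgroup.lowerCentralSeries (⊤ : Subgroup Γ) k ≤ J (k + 1) := by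
    intro k
    induction k with
    | zero =>
        -- lcs 0 = ⊤ ≤ J 1
        rw [lowerCentralSeries_zero]
        rw [← htop]
        refine iSup_le fun j => ?_
        intro x hx
        refine hJmem 1 ⟨{j}, Finset.card_singleton j⟩ x ?_
        simp [hx]
    | succ k ih =>
        rw [lowerCentralSeries_succ]
        calc ⁅Subgroup.lowerCentralSeries (⊤ : Subgroup Γ) k, (⊤ : Subgroup Γ)⁆
            ≤ ⁅J (k+1), (⊤ : Subgroup Γ)⁆ := Subgroup.commutator_mono ih le_rfl
          _ ≤ J (k+2) := hstep (k+1)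
  have hempty : IsEmpty {S : Finset ι // S.card = Fintype.card ι + 1} := by
    constructor
    rintro ⟨S, hS⟩
    have := Finset.card_le_univ S
    omega
  have hbot : J (Fintype.card ι + 1) = ⊥ := by
    haveI := hempty
    exact iSup_of_empty _
  refine nilpotent_iff_lowerCentralSeries.mpr ⟨Fintype.card ι, ?_⟩
  have := hlcs (Fintype.card ι)
  rw [hbot] at this
  exact le_bot_iff.mp this

lemma hg_conj {g : G} (hg : ∀ x : G, gcomm (gcomm (gcomm g x) g) x = 1) (c : G) :
    ∀ y : G, gcomm (gcomm (gcomm (c * g * c⁻¹) y) (c * g * c⁻¹)) y = 1 := by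
  intro y
  have key : gcomm (gcomm (gcomm (c*g*c⁻¹) y) (c*g*c⁻¹)) y
      = c * (gcomm (gcomm (gcomm g (c⁻¹*y*c)) g) (c⁻¹*y*c)) * c⁻¹ := by
    unfold gcomm; group
  rw [key, hg (c⁻¹*y*c)]; group

lemma normalClosure_conj_eq {g c : G} :
    Subgroup.normalClosure ({g} : Set G)
      ≤ Subgroup.normalClosure ({c * g * c⁻¹} : Set G) := by
  apply Subgroup.normalClosure_le_normal
  intro x hx
  have hx' : x = g := Set.mem_singleton_iff.mp hx
  have h1 : (c*g*c⁻¹) ∈ Subgroup.normalClosure ({c*g*c⁻¹} : Set G) :=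
    Subgroup.subset_normalClosure rfl
  have h2 := Subgroup.normalClosure_normal.conj_mem _ h1 c⁻¹
  rw [show c⁻¹ * (c*g*c⁻¹) * c⁻¹⁻¹ = g by group] at h2
  simp only [SetLike.mem_coe]
  rw [hx']
  exact h2

lemma exists_finset_of_mem_closure {s : Set G} {x : G} (hx : x ∈ Subgroup.closure s) :
    ∃ T : Finset G, ↑T ⊆ s ∧ x ∈ Subgroup.closure (T : Set G) := by
  classical
  induction hx using Subgroup.closure_induction with
  | mem x hx => exact ⟨{x}, by simpa using hx, Subgroup.subset_closure (by simp)⟩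
  | one => exact ⟨∅, by simp, one_mem _⟩
  | mul x y _ _ hx hy =>
      obtain ⟨T1, hT1, hx1⟩ := hx
      obtain ⟨T2, hT2, hy2⟩ := hy
      refine ⟨T1 ∪ T2, by simp [Set.union_subset_iff]; exact ⟨fun x hx => hT1 hx, fun x hx => hT2 hx⟩, ?_⟩
      have l1 : Subgroup.closure (T1 : Set G) ≤ Subgroup.closure ((T1 ∪ T2 : Finset G) : Set G) :=
        Subgroup.closure_mono (by simp [Set.subset_def]; tauto)
      have l2 : Subgroup.closure (T2 : Set G) ≤ Subgroup.closure ((T1 ∪ T2 : Finset G) : Set G) :=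
        Subgroup.closure_mono (by simp [Set.subset_def]; tauto)
      exact mul_mem (l1 hx1) (l2 hy2)
  | inv x _ hx =>
      obtain ⟨T1, hT1, hx1⟩ := hx
      exact ⟨T1, hT1, inv_mem hx1⟩

lemma exists_finset_of_finset_subset_closure {s : Set G} (T : Finset G)
    (hT : ↑T ⊆ (Subgroup.closure s : Set G)) :
    ∃ V : Finset G, ↑V ⊆ s ∧ (T : Set G) ⊆ (Subgroup.closure (V : Set G) : Set G) := by
  classical
  induction T using Finset.induction with
  | empty => exact ⟨∅, by simp, by simp⟩
  | @insert a T ha ih =>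
      have hsub : ↑T ⊆ (Subgroup.closure s : Set G) := by
        intro y hy; exact hT (by simp [hy])
      obtain ⟨V1, hV1, hTV1⟩ := ih hsub
      have hamem : a ∈ Subgroup.closure s := hT (by simp)
      obtain ⟨V2, hV2, haV2⟩ := exists_finset_of_mem_closure hamem
      refine ⟨V1 ∪ V2, by simp [Set.union_subset_iff]; exact ⟨fun x hx => hV1 hx, fun x hx => hV2 hx⟩, ?_⟩
      intro y hy
      have l1 : Subgroup.closure (V1 : Set G) ≤ Subgroup.closure ((V1 ∪ V2 : Finset G) : Set G) :=
        Subgroup.closure_mono (by simp [Set.subset_def]; tauto)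
      have l2 : Subgroup.closure (V2 : Set G) ≤ Subgroup.closure ((V1 ∪ V2 : Finset G) : Set G) :=
        Subgroup.closure_mono (by simp [Set.subset_def]; tauto)
      rcases Finset.mem_coe.mp hy with hy'
      rcases Finset.mem_insert.mp hy' with rfl | hyT
      · exact l2 haV2
      · exact l1 (hTV1 hyT)

set_option maxHeartbeats 2000000 in
theorem N_locallyNilpotent {g : G} (hg : ∀ x : G, gcomm (gcomm (gcomm g x) g) x = 1) :
    IsLocallyNilpotent ↥(Subgroup.normalClosure ({g} : Set G)) := by
  classical
  set N := Subgroup.normalClosure ({g} : Set G) with hNdef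
  intro H hFG
  obtain ⟨T, hTgen⟩ := hFG
  set Hm : Subgroup G := H.map N.subtype with hHm
  -- elements of Hm are in N = closure of conjugates
  have hHmN : Hm ≤ N := by
    rintro x ⟨y, _, rfl⟩
    exact y.2
  have hHmclosed : ↑(T.image (N.subtype)) ⊆ (Subgroup.closure (Group.conjugatesOfSet ({g} : Set G)) : Set G) := by
    intro x hx
    simp only [Finset.coe_image, Set.mem_image] at hx
    obtain ⟨y, _, rfl⟩ := hx
    exact y.2
  obtain ⟨V, hVsub, hTV⟩ := exists_finset_of_finset_subset_closure _ hHmclosed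
  have hHmle : Hm ≤ Subgroup.closure (V : Set G) := by
    rw [hHm, ← hTgen, MonoidHom.map_closure]
    apply (Subgroup.closure_le _).mpr
    intro x hx
    simp only [Set.mem_image, SetLike.mem_coe] at hx ⊢
    obtain ⟨y, hy, rfl⟩ := hx
    exact hTV (Finset.mem_coe.mpr (Finset.mem_image_of_mem _ hy))
  -- conjugate facts for elements of V
  have hVconj : ∀ u : G, u ∈ V → ∃ c : G, u = c * g * c⁻¹ := by
    intro u hu
    have := hVsub hu
    obtain ⟨a, ha, hconj⟩ := Group.mem_conjugatesOfSet_iff.mp this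
    rw [Set.mem_singleton_iff] at ha
    obtain ⟨c, hc⟩ := isConj_iff.mp (ha ▸ hconj)
    exact ⟨c, hc.symm⟩
  have hVN : ∀ u : G, u ∈ V → u ∈ N := by
    intro u hu
    obtain ⟨c, rfl⟩ := hVconj u hu
    have h1 : g ∈ N := Subgroup.subset_normalClosure rfl
    exact Subgroup.normalClosure_normal.conj_mem _ h1 c
  -- the big subgroup P
  set P : Subgroup G := ⨆ u : {u : G // u ∈ V}, KK g u.1 with hP
  have hPN : P ≤ N := iSup_le fun u => KK_le_N (hVN u.1 u.2)
  have hVP : Subgroup.closure (V : Set G) ≤ P := by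
    apply (Subgroup.closure_le _).mpr
    intro u hu
    exact Subgroup.mem_iSup_of_mem (S := fun u : {u : G // u ∈ V} => KK g u.1) ⟨u, hu⟩ (mem_KK_self g u)
  have hHmP : Hm ≤ P := le_trans hHmle hVP
  -- the abelian normal subgroups of P
  set B : {u : G // u ∈ V} → Subgroup ↥P := fun u => (KK g u.1).subgroupOf P with hB
  have hBnorm : ∀ u, (B u).Normal := by
    intro u
    constructor
    intro x hx n
    rw [hB, Subgroup.mem_subgroupOf] at hx ⊢
    have : (n : G) * (x : G) * (n : G)⁻¹ ∈ KK g u.1 := KK_conj_stable (hPN n.2) hx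
    simpa using this
  have hBab : ∀ u, ∀ a ∈ B u, ∀ b ∈ B u, Commute a b := by
    intro u a ha b hb
    rw [hB, Subgroup.mem_subgroupOf] at ha hb
    obtain ⟨c, hc⟩ := hVconj u.1 u.2
    have hu : ∀ x : G, gcomm (gcomm (gcomm u.1 x) u.1) x = 1 := by
      rw [hc]; exact hg_conj hg c
    have hNle : N ≤ Subgroup.normalClosure ({u.1} : Set G) := by
      rw [hc]; exact normalClosure_conj_eq
    have := KK_commute hu hNle _ ha _ hb
    exact Subtype.ext this
  have hBtop : (⨆ u, B u) = (⊤ : Subgroup ↥P) := by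
    rw [eq_top_iff]
    rintro ⟨x, hx⟩ _
    have hx' : x ∈ ⨆ u : {u : G // u ∈ V}, KK g u.1 := hx
    refine Subgroup.iSup_induction' (S := fun u : {u : G // u ∈ V} => KK g u.1)
      (C := fun v _ => ∀ (hv' : v ∈ P), (⟨v, hv'⟩ : ↥P) ∈ ⨆ u, B u) ?_ ?_ ?_ hx' hx
    · intro u v hv hv'
      exact Subgroup.mem_iSup_of_mem (S := B) u
        (by rw [hB, Subgroup.mem_subgroupOf]; exact hv)
    · intro hv'
      have h1 : (⟨1, hv'⟩ : ↥P) = 1 := rfl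
      rw [h1]; exact one_mem _
    · intro v w hv hw Cv Cw hvw'
      have hvP : v ∈ P := hv
      have hwP : w ∈ P := hw
      have hm : (⟨v*w, hvw'⟩ : ↥P) = ⟨v, hvP⟩ * ⟨w, hwP⟩ := rfl
      rw [hm]; exact mul_mem (Cv hvP) (Cw hwP)
  haveI hPnil : Group.IsNilpotent ↥P := fitting_abelian B hBnorm hBab hBtop
  -- transfer to H
  have hHmnil : Group.IsNilpotent ↥Hm := by
    haveI : Group.IsNilpotent ↥(Hm.subgroupOf P) := Subgroup.isNilpotent _
    exact nilpotent_of_mulEquiv (Subgroup.subgroupOfEquivOfLe hHmP)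
  have e1 : ↥H ≃* ↥Hm := Subgroup.equivMapOfInjective H N.subtype N.subtype_injective
  exact nilpotent_of_mulEquiv e1.symm
end HeinekenAux

theorem heineken_lemma {G : Type*} [Group G] (g : G)
    (hg : ∀ x : G, gcomm (gcomm (gcomm g x) g) x = 1) :
    (∀ a b : Subgroup.normalClosure
        ({⟨g, Subgroup.subset_normalClosure (Set.mem_singleton g)⟩} :
          Set ↥(Subgroup.normalClosure ({g} : Set G))),
        a * b = b * a) ∧
    g ∈ HirschPlotkinRadical G := by
  constructor
  · exact HeinekenAux.part1 hg
  · have hN : (Subgroup.normalClosure ({g} : Set G)).Normal := Subgroup.normalClosure_normal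
    have hLN := HeinekenAux.N_locallyNilpotent hg
    unfold HirschPlotkinRadical
    apply Subgroup.subset_closure
    refine Set.mem_iUnion₂.mpr ⟨Subgroup.normalClosure ({g} : Set G), ⟨hN, hLN⟩, ?_⟩
    exact Subgroup.subset_normalClosure rfl
end

section
/- Let H be a normal subgroup of a group G such that both H and G/H are locally nilpotent, and suppose G is an Engel group (for all x, y ∈ G there exists n with [x, y, y, …, y] = 1, with y repeated n times). Then G is locally nilpotent. -/
namespace EngelProof

open Subgroup

open scoped commutatorElement

variable {Γ : Type*} [Group Γ] {Δ : Type*} [Group Δ]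

/-! ### Basic lemmas about `gcomm` and `engelComm` -/

theorem gcomm_def (a b : Γ) : gcomm a b = a⁻¹ * b⁻¹ * a * b := rfl

@[simp] theorem engelComm_zero (x y : Γ) : engelComm x y 0 = x := rfl

theorem engelComm_succ (x y : Γ) (n : ℕ) :
    engelComm x y (n + 1) = gcomm (engelComm x y n) y := rfl

@[simp] theorem gcomm_one_left (t : Γ) : gcomm 1 t = 1 := by
  simp [gcomm_def]

@[simp] theorem gcomm_one_right (x : Γ) : gcomm x 1 = 1 := by
  simp [gcomm_def]

theorem engelComm_one_left (y : Γ) (n : ℕ) : engelComm 1 y n = 1 := by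
  induction n with
  | zero => rfl
  | succ n ih => rw [engelComm_succ, ih, gcomm_one_left]

theorem engelComm_eq_one_of_le {x y : Γ} {n m : ℕ} (h : engelComm x y n = 1) (hnm : n ≤ m) :
    engelComm x y m = 1 := by
  induction m with
  | zero => exact (Nat.le_zero.mp hnm) ▸ h
  | succ m ih =>
      rcases Nat.lt_or_ge n (m+1) with hlt | hge
      · have := ih (Nat.lt_succ_iff.mp hlt)
        rw [engelComm_succ, this, gcomm_one_left]
      · exact (Nat.le_antisymm hnm hge) ▸ h

theorem map_gcomm (f : Γ →* Δ) (a b : Γ) : f (gcomm a b) = gcomm (f a) (f b) := by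
  simp [gcomm_def]

theorem map_engelComm (f : Γ →* Δ) (x y : Γ) (n : ℕ) :
    f (engelComm x y n) = engelComm (f x) (f y) n := by
  induction n with
  | zero => rfl
  | succ n ih => rw [engelComm_succ, map_gcomm, ih, engelComm_succ]

theorem gcomm_mem {P : Subgroup Γ} {a b : Γ} (ha : a ∈ P) (hb : b ∈ P) : gcomm a b ∈ P :=
  mul_mem (mul_mem (mul_mem (inv_mem ha) (inv_mem hb)) ha) hb

theorem engelComm_mem {P : Subgroup Γ} {x y : Γ} (hx : x ∈ P) (hy : y ∈ P) (n : ℕ) :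
    engelComm x y n ∈ P := by
  induction n with
  | zero => exact hx
  | succ n ih => exact gcomm_mem ih hy

/-! Commutator identities, all proved by `group`. -/

theorem gcomm_mul_left (x y t : Γ) :
    gcomm (x * y) t = (y⁻¹ * gcomm x t * y) * gcomm y t := by
  simp only [gcomm_def]; group

theorem gcomm_mul_right (x t u : Γ) :
    gcomm x (t * u) = gcomm x u * (u⁻¹ * gcomm x t * u) := by
  simp only [gcomm_def]; group

theorem gcomm_inv_left (x t : Γ) : gcomm x⁻¹ t = x * (gcomm x t)⁻¹ * x⁻¹ := by
  simp only [gcomm_def]; group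

theorem gcomm_inv_right (x t : Γ) : gcomm x t⁻¹ = t * (gcomm x t)⁻¹ * t⁻¹ := by
  simp only [gcomm_def]; group

theorem commutatorElement_eq_gcomm (x t : Γ) : ⁅x, t⁆ = gcomm x⁻¹ t⁻¹ := by
  simp only [commutatorElement_def, gcomm_def]; group

theorem gcomm_conj (g x t : Γ) : g⁻¹ * gcomm x t * g = gcomm (g⁻¹ * x * g) (g⁻¹ * t * g) := by
  simp only [gcomm_def]; group

theorem conj_eq_mul_gcomm (b a : Γ) : a⁻¹ * b * a = b * gcomm b a := by
  simp only [gcomm_def]; group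

theorem gcomm_eq_one_iff_commute {a b : Γ} : gcomm a b = 1 ↔ a * b = b * a := by
  constructor
  · intro h
    have : a * (a⁻¹ * b⁻¹ * a * b) * b⁻¹ = a * 1 * b⁻¹ := by rw [← gcomm_def, h]
    calc a * b = b * (a * (a⁻¹ * b⁻¹ * a * b) * b⁻¹) * b := by group
    _ = b * (a * 1 * b⁻¹) * b := by rw [this]
    _ = b * a := by group
  · intro h
    simp only [gcomm_def]
    calc a⁻¹ * b⁻¹ * a * b = a⁻¹ * b⁻¹ * (a * b) := by group
    _ = a⁻¹ * b⁻¹ * (b * a) := by rw [h]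
    _ = 1 := by group

theorem gcomm_eq_one_of_commute {a b : Γ} (h : a * b = b * a) : gcomm a b = 1 :=
  gcomm_eq_one_iff_commute.mpr h

theorem engelComm_conj (g x a : Γ) (n : ℕ) :
    g⁻¹ * engelComm x a n * g = engelComm (g⁻¹ * x * g) (g⁻¹ * a * g) n := by
  induction n with
  | zero => rfl
  | succ n ih =>
      rw [engelComm_succ, engelComm_succ, ← ih, ← gcomm_conj]

/-! ### Conjugation stability -/

/-- The conjugation homomorphism `x ↦ g * x * g⁻¹`. -/
def conjHom (g : Γ) : Γ →* Γ where
  toFun := fun x => g * x * g⁻¹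
  map_one' := by group
  map_mul' := fun x y => by group

@[simp] theorem conjHom_apply (g x : Γ) : conjHom g x = g * x * g⁻¹ := rfl

/-- `B` is stable under conjugation by `g`. -/
def ConjStable (g : Γ) (B : Subgroup Γ) : Prop :=
  ∀ x : Γ, g * x * g⁻¹ ∈ B ↔ x ∈ B

theorem ConjStable.map_eq {g : Γ} {B : Subgroup Γ} (h : ConjStable g B) :
    B.map (conjHom g) = B := by
  ext y
  constructor
  · rintro ⟨x, hx, rfl⟩
    exact (h x).mpr hx
  · intro hy
    exact ⟨g⁻¹ * y * g, by
      have := h (g⁻¹ * y * g)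
      rw [show g * (g⁻¹ * y * g) * g⁻¹ = y by group] at this
      exact this.mp hy, by simp; group⟩

theorem conjStable_of_map_eq {g : Γ} {B : Subgroup Γ} (h : B.map (conjHom g) = B) :
    ConjStable g B := by
  intro x
  constructor
  · intro hx
    rw [← h] at hx
    rcases hx with ⟨y, hy, hxy⟩
    simp only [conjHom_apply] at hxy
    have : y = x := by
      have := hxy
      calc y = g⁻¹ * (g * y * g⁻¹) * g := by group
      _ = g⁻¹ * (g * x * g⁻¹) * g := by rw [this]
      _ = x := by group
    exact this ▸ hy
  · intro hx
    rw [← h]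
    exact ⟨x, hx, rfl⟩

theorem ConjStable.inv {g : Γ} {B : Subgroup Γ} (h : ConjStable g B) : ConjStable g⁻¹ B := by
  intro x
  have := (h (g⁻¹ * x * g)).symm
  rw [show g * (g⁻¹ * x * g) * g⁻¹ = x by group] at this
  rw [show g⁻¹ * x * g⁻¹⁻¹ = g⁻¹ * x * g by group]
  exact this

theorem ConjStable.mul {g h : Γ} {B : Subgroup Γ} (hg : ConjStable g B) (hh : ConjStable h B) :
    ConjStable (g * h) B := by
  intro x
  rw [show g * h * x * (g * h)⁻¹ = g * (h * x * h⁻¹) * g⁻¹ by group]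
  rw [hg, hh]

theorem conjStable_one (B : Subgroup Γ) : ConjStable 1 B := by
  intro x; rw [show (1:Γ) * x * 1⁻¹ = x by group]

theorem conjStable_self {b : Γ} {B : Subgroup Γ} (hb : b ∈ B) : ConjStable b B := by
  intro x
  constructor
  · intro hx
    have : x = b⁻¹ * (b * x * b⁻¹) * b := by group
    rw [this]
    exact mul_mem (mul_mem (inv_mem hb) hx) hb
  · intro hx
    exact mul_mem (mul_mem hb hx) (inv_mem hb)

theorem conjStable_sup {g : Γ} {P Q : Subgroup Γ} (hP : ConjStable g P) (hQ : ConjStable g Q) :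
    ConjStable g (P ⊔ Q) :=
  conjStable_of_map_eq (by rw [Subgroup.map_sup, hP.map_eq, hQ.map_eq])

theorem conjStable_of_forall {g : Γ} {B : Subgroup Γ}
    (h1 : ∀ x ∈ B, g * x * g⁻¹ ∈ B) (h2 : ∀ x ∈ B, g⁻¹ * x * g ∈ B) :
    ConjStable g B := by
  intro x
  refine ⟨fun hx => ?_, fun hx => h1 x hx⟩
  have := h2 _ hx
  rwa [show g⁻¹ * (g * x * g⁻¹) * g = x by group] at this

/-- The set of elements `g` such that `B` is stable under conjugation by `g` is a subgroup. -/
def stabilizerSub (B : Subgroup Γ) : Subgroup Γ where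
  carrier := {g | ConjStable g B}
  one_mem' := conjStable_one B
  mul_mem' := fun hg hh => hg.mul hh
  inv_mem' := fun hg => hg.inv

theorem normal_of_closure_conjStable {T : Set Γ} {B : Subgroup Γ}
    (htop : Subgroup.closure T = ⊤) (h : ∀ g ∈ T, ConjStable g B) : B.Normal := by
  have hall : ∀ g : Γ, ConjStable g B := by
    intro g
    have : g ∈ stabilizerSub B := by
      have : Subgroup.closure T ≤ stabilizerSub B := Subgroup.closure_le _ |>.mpr h
      rw [htop] at this
      exact this (Subgroup.mem_top g)
    exact this
  exact ⟨fun n hn g => (hall g n).mpr hn⟩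

/-! ### Relative lower central series -/

/-- The relative lower central series of a subgroup `B`, as subgroups of the ambient group. -/
def gammaRel (B : Subgroup Γ) : ℕ → Subgroup Γ
  | 0 => B
  | n + 1 => ⁅gammaRel B n, B⁆

@[simp] theorem gammaRel_zero (B : Subgroup Γ) : gammaRel B 0 = B := rfl

theorem gammaRel_succ (B : Subgroup Γ) (n : ℕ) :
    gammaRel B (n + 1) = ⁅gammaRel B n, B⁆ := rfl

theorem gammaRel_le (B : Subgroup Γ) (n : ℕ) : gammaRel B n ≤ B := by
  induction n with
  | zero => exact le_rfl
  | succ n ih =>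
      rw [gammaRel_succ]
      rw [Subgroup.commutator_le]
      intro p hp q hq
      exact mul_mem (mul_mem (mul_mem (ih hp) hq) (inv_mem (ih hp))) (inv_mem hq)

theorem map_gammaRel (f : Γ →* Δ) (B : Subgroup Γ) (n : ℕ) :
    (gammaRel B n).map f = gammaRel (B.map f) n := by
  induction n with
  | zero => rfl
  | succ n ih => rw [gammaRel_succ, Subgroup.map_commutator, ih, gammaRel_succ]

theorem gammaRel_conjStable {g : Γ} {B : Subgroup Γ} (hg : ConjStable g B) (n : ℕ) :
    ConjStable g (gammaRel B n) :=
  conjStable_of_map_eq (by rw [map_gammaRel, hg.map_eq])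

theorem gammaRel_eq_map_lcs (B : Subgroup Γ) (n : ℕ) :
    gammaRel B n = (Subgroup.lowerCentralSeries (⊤ : Subgroup ↥B) n).map B.subtype := by
  induction n with
  | zero =>
      rw [gammaRel_zero, Subgroup.lowerCentralSeries_zero]
      rw [← MonoidHom.range_eq_map, Subgroup.range_subtype]
  | succ n ih =>
      rw [gammaRel_succ, ih]
      have hstep : Subgroup.lowerCentralSeries (⊤ : Subgroup ↥B) (n+1) = ⁅Subgroup.lowerCentralSeries (⊤ : Subgroup ↥B) n, ⊤⁆ := rfl
      rw [hstep, Subgroup.map_commutator]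
      congr 1
      rw [← MonoidHom.range_eq_map, Subgroup.range_subtype]

theorem isNilpotent_iff_gammaRel (B : Subgroup Γ) :
    Group.IsNilpotent ↥B ↔ ∃ n, gammaRel B n = ⊥ := by
  rw [Subgroup.nilpotent_iff_lowerCentralSeries]
  constructor
  · rintro ⟨n, hn⟩
    exact ⟨n, by rw [gammaRel_eq_map_lcs, hn, Subgroup.map_bot]⟩
  · rintro ⟨n, hn⟩
    refine ⟨n, ?_⟩
    rw [gammaRel_eq_map_lcs] at hn
    apply Subgroup.map_injective B.subtype_injective
    rw [hn, Subgroup.map_bot]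

/-! ### Nilpotency and finite-generation transfer lemmas -/

theorem isNilpotent_of_le {U P : Subgroup Γ} (h : U ≤ P) (hP : Group.IsNilpotent ↥P) :
    Group.IsNilpotent ↥U := by
  haveI := hP
  haveI : Group.IsNilpotent ↥(U.subgroupOf P) := Subgroup.isNilpotent _
  exact nilpotent_of_mulEquiv (Subgroup.subgroupOfEquivOfLe h)

theorem map_subgroupOf_of_le {U P : Subgroup Γ} (h : U ≤ P) :
    (U.subgroupOf P).map P.subtype = U := by
  rw [Subgroup.subgroupOf_map_subtype, inf_eq_left.mpr h]

theorem fg_subgroupOf {U P : Subgroup Γ} (h : U ≤ P) (hU : U.FG) : (U.subgroupOf P).FG := by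
  rcases (Subgroup.fg_iff U).mp hU with ⟨S, hSc, hSfin⟩
  have hSP : S ⊆ (P : Set Γ) := fun x hx => h (hSc ▸ Subgroup.subset_closure hx)
  refine (Subgroup.fg_iff _).mpr ⟨P.subtype ⁻¹' S, ?_, hSfin.preimage P.subtype_injective.injOn⟩
  apply Subgroup.map_injective P.subtype_injective
  rw [MonoidHom.map_closure, map_subgroupOf_of_le h, ← hSc]
  congr 1
  ext x
  constructor
  · rintro ⟨y, hy, rfl⟩; exact hy
  · intro hx; exact ⟨⟨x, hSP hx⟩, hx, rfl⟩

theorem fg_map (f : Γ →* Δ) {B : Subgroup Γ} (hB : B.FG) : (B.map f).FG := by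
  rcases (Subgroup.fg_iff B).mp hB with ⟨S, hSc, hSfin⟩
  exact (Subgroup.fg_iff _).mpr ⟨f '' S, by rw [← hSc, MonoidHom.map_closure], hSfin.image f⟩

/-! ### Generation of lower central terms by basic commutators -/

/-- Left-normed commutators of weight `n+1` in the generating set `X`. -/
def Cset (X : Set Γ) : ℕ → Set Γ
  | 0 => X
  | n + 1 => {z | ∃ p ∈ Cset X n, ∃ x ∈ X, z = gcomm p x}

theorem Cset_finite {X : Set Γ} (hX : X.Finite) (n : ℕ) : (Cset X n).Finite := by
  induction n with
  | zero => exact hX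
  | succ n ih =>
      have : Cset X (n+1) = Set.image2 gcomm (Cset X n) X := by
        ext z
        simp [Cset, Set.mem_image2, eq_comm]
      rw [this]
      exact Set.Finite.image2 _ ih hX

theorem Cset_subset_gammaRel {X : Set Γ} {B : Subgroup Γ} (hX : Subgroup.closure X = B) (n : ℕ) :
    Cset X n ⊆ (gammaRel B n : Set Γ) := by
  induction n with
  | zero => exact fun x hx => hX ▸ Subgroup.subset_closure hx
  | succ n ih =>
      rintro z ⟨p, hp, x, hx, rfl⟩
      rw [show gcomm p x = ⁅p⁻¹, x⁻¹⁆ by rw [commutatorElement_eq_gcomm]; simp]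
      exact Subgroup.commutator_mem_commutator (inv_mem (ih hp))
        (inv_mem (hX ▸ Subgroup.subset_closure hx))

/-- The normal closure of `S` relative to the subgroup `B`. -/
def nclB (B : Subgroup Γ) (S : Set Γ) : Subgroup Γ :=
  Subgroup.closure {z | ∃ s ∈ S, ∃ b ∈ B, z = b⁻¹ * s * b}

theorem subset_nclB (B : Subgroup Γ) (S : Set Γ) : S ⊆ (nclB B S : Set Γ) := by
  intro s hs
  exact Subgroup.subset_closure ⟨s, hs, 1, one_mem B, by group⟩

theorem nclB_conjStable {B : Subgroup Γ} {S : Set Γ} {b : Γ} (hb : b ∈ B) :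
    ConjStable b (nclB B S) := by
  apply conjStable_of_map_eq
  rw [nclB, MonoidHom.map_closure]
  congr 1
  ext z
  constructor
  · rintro ⟨w, ⟨s, hs, b', hb', rfl⟩, rfl⟩
    exact ⟨s, hs, b' * b⁻¹, mul_mem hb' (inv_mem hb), by simp; group⟩
  · rintro ⟨s, hs, b', hb', rfl⟩
    exact ⟨(b' * b)⁻¹ * s * (b' * b), ⟨s, hs, b' * b, mul_mem hb' hb, rfl⟩, by simp; group⟩

theorem nclB_le {B : Subgroup Γ} {S : Set Γ} {P : Subgroup Γ}
    (h : ∀ s ∈ S, ∀ b ∈ B, b⁻¹ * s * b ∈ P) : nclB B S ≤ P := by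
  apply Subgroup.closure_le _ |>.mpr
  rintro z ⟨s, hs, b, hb, rfl⟩
  exact h s hs b hb

theorem nclB_le_gammaRel {X : Set Γ} {B : Subgroup Γ} (hX : Subgroup.closure X = B) (n : ℕ) :
    nclB B (Cset X n) ≤ gammaRel B n := by
  apply nclB_le
  intro s hs b hb
  have hsg : s ∈ gammaRel B n := Cset_subset_gammaRel hX n hs
  have := (gammaRel_conjStable (conjStable_self hb) n).inv
  have h2 := this s
  rw [show b⁻¹ * s * b⁻¹⁻¹ = b⁻¹ * s * b by group] at h2
  exact h2.mpr hsg

/-- The key generation lemma: `γₙ(B)` is contained in the `B`-normal closure of the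
weight-`n+1` commutators in the generators, modulo `γₙ₊₁(B)`. -/
theorem gen_aux {X : Set Γ} {B : Subgroup Γ} (hX : Subgroup.closure X = B) :
    ∀ n : ℕ, gammaRel B n ≤ nclB B (Cset X n) ⊔ gammaRel B (n + 1) := by
  intro n
  induction n with
  | zero =>
      calc gammaRel B 0 = Subgroup.closure X := (gammaRel_zero B).trans hX.symm
      _ ≤ nclB B (Cset X 0) := Subgroup.closure_le _ |>.mpr (subset_nclB B X)
      _ ≤ _ := le_sup_left
  | succ n ih =>
      set L := nclB B (Cset X (n+1)) ⊔ gammaRel B (n+2) with hL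
      have hLstable : ∀ b ∈ B, ConjStable b L := fun b hb =>
        conjStable_sup (nclB_conjStable hb) (gammaRel_conjStable (conjStable_self hb) _)
      -- subgroup of elements p ∈ B with all gcomm p t ∈ L for t ∈ B
      set D : Subgroup Γ :=
        { carrier := {p | p ∈ B ∧ ∀ t ∈ B, gcomm p t ∈ L}
          one_mem' := ⟨one_mem B, fun t _ => by rw [gcomm_one_left]; exact one_mem L⟩
          mul_mem' := by
            rintro p q ⟨hpB, hp⟩ ⟨hqB, hq⟩
            refine ⟨mul_mem hpB hqB, fun t ht => ?_⟩
            rw [gcomm_mul_left]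
            refine mul_mem ?_ (hq t ht)
            have := ((hLstable q hqB).inv) (gcomm p t)
            rw [show q⁻¹ * gcomm p t * q⁻¹⁻¹ = q⁻¹ * gcomm p t * q by group] at this
            exact this.mpr (hp t ht)
          inv_mem' := by
            rintro p ⟨hpB, hp⟩
            refine ⟨inv_mem hpB, fun t ht => ?_⟩
            rw [gcomm_inv_left]
            exact (hLstable p hpB (gcomm p t)⁻¹).mpr (inv_mem (hp t ht)) } with hD
      have hDmem : ∀ p, p ∈ D ↔ p ∈ B ∧ ∀ t ∈ B, gcomm p t ∈ L := fun p => Iff.rfl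
      -- claim 1 : for s in Cset X n, all gcomm s u ∈ L for u ∈ B
      have claim1 : ∀ s ∈ Cset X n, ∀ u ∈ B, gcomm s u ∈ L := by
        intro s hs
        set E : Subgroup Γ :=
          { carrier := {u | u ∈ B ∧ gcomm s u ∈ L}
            one_mem' := ⟨one_mem B, by rw [gcomm_one_right]; exact one_mem L⟩
            mul_mem' := by
              rintro t u ⟨htB, ht⟩ ⟨huB, hu⟩
              refine ⟨mul_mem htB huB, ?_⟩
              rw [gcomm_mul_right]
              refine mul_mem hu ?_
              have := ((hLstable u huB).inv) (gcomm s t)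
              rw [show u⁻¹ * gcomm s t * u⁻¹⁻¹ = u⁻¹ * gcomm s t * u by group] at this
              exact this.mpr ht
            inv_mem' := by
              rintro t ⟨htB, ht⟩
              refine ⟨inv_mem htB, ?_⟩
              rw [gcomm_inv_right]
              exact (hLstable t htB (gcomm s t)⁻¹).mpr (inv_mem ht) }
        intro u hu
        have hXE : X ⊆ (E : Set Γ) := by
          intro x hx
          refine ⟨hX ▸ Subgroup.subset_closure hx, ?_⟩
          have : gcomm s x ∈ Cset X (n+1) := ⟨s, hs, x, hx, rfl⟩
          exact le_sup_left (a := nclB B (Cset X (n+1))) (subset_nclB _ _ this)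
        have : B ≤ E := hX ▸ (Subgroup.closure_le _ |>.mpr hXE)
        exact (this hu).2
      -- claim 2 : nclB B (Cset X n) ≤ D
      have claim2 : nclB B (Cset X n) ≤ D := by
        apply nclB_le
        intro s hs b hb
        have hsB : s ∈ B := gammaRel_le B n (Cset_subset_gammaRel hX n hs)
        refine ⟨mul_mem (mul_mem (inv_mem hb) hsB) hb, fun t ht => ?_⟩
        have key : gcomm (b⁻¹ * s * b) t = b⁻¹ * gcomm s (b * t * b⁻¹) * b := by
          rw [gcomm_conj b s (b * t * b⁻¹)]
          congr 1
          group
        rw [key]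
        have h1 : gcomm s (b * t * b⁻¹) ∈ L :=
          claim1 s hs _ ((conjStable_self hb t).mpr ht)
        have := ((hLstable b hb).inv) (gcomm s (b * t * b⁻¹))
        rw [show b⁻¹ * gcomm s (b * t * b⁻¹) * b⁻¹⁻¹ = b⁻¹ * gcomm s (b * t * b⁻¹) * b by group]
          at this
        exact this.mpr h1
      -- claim 3 : gammaRel B (n+1) ≤ D
      have claim3 : gammaRel B (n+1) ≤ D := by
        intro p hp
        refine ⟨gammaRel_le B (n+1) hp, fun t ht => ?_⟩
        have : gcomm p t = ⁅p⁻¹, t⁻¹⁆ := by rw [commutatorElement_eq_gcomm]; simp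
        rw [this]
        have : ⁅p⁻¹, t⁻¹⁆ ∈ gammaRel B (n+2) :=
          Subgroup.commutator_mem_commutator (inv_mem hp) (inv_mem ht)
        exact le_sup_right (a := nclB B (Cset X (n+1))) this
      have hin : gammaRel B n ≤ D := le_trans ih (sup_le claim2 claim3)
      rw [gammaRel_succ, Subgroup.commutator_le]
      intro p hp t ht
      rw [commutatorElement_eq_gcomm]
      exact (hin (inv_mem hp)).2 t⁻¹ (inv_mem ht)

theorem gammaRel_last_eq_closure {X : Set Γ} {B : Subgroup Γ} (hX : Subgroup.closure X = B)
    {c : ℕ} (hc : gammaRel B (c + 1) = ⊥) :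
    gammaRel B c = Subgroup.closure (Cset X c) := by
  apply le_antisymm
  · have h1 := gen_aux hX c
    rw [hc, sup_bot_eq] at h1
    refine le_trans h1 ?_
    apply nclB_le
    intro s hs b hb
    have hcomm : s * b = b * s := by
      have : ⁅s, b⁆ ∈ gammaRel B (c+1) :=
        Subgroup.commutator_mem_commutator (Cset_subset_gammaRel hX c hs) hb
      rw [hc, Subgroup.mem_bot] at this
      exact commutatorElement_eq_one_iff_mul_comm.mp this
    have : b⁻¹ * s * b = s := by
      calc b⁻¹ * s * b = b⁻¹ * (s * b) := by group
      _ = b⁻¹ * (b * s) := by rw [hcomm]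
      _ = s := by group
    rw [this]
    exact Subgroup.subset_closure hs
  · exact Subgroup.closure_le _ |>.mpr (Cset_subset_gammaRel hX c)

/-! ### The key lemma (Gruenberg): a nilpotent normal-ish subgroup joined with an
Engel element generates a nilpotent group. Proved by induction on the class. -/

universe u

theorem key_inner (c : ℕ) : ∀ (Γ₂ : Type u) (_ : Group Γ₂)
    (hE : ∀ x y : Γ₂, ∃ n, engelComm x y n = 1)
    (B : Subgroup Γ₂) (a : Γ₂) (_ : B.FG)
    (_ : ConjStable a B)
    (_ : Subgroup.closure ((B : Set Γ₂) ∪ {a}) = ⊤)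
    (_ : gammaRel B c = ⊥), Group.IsNilpotent Γ₂ := by
  induction c with
  | zero =>
      intro Γ₂ _ hE B a hfg hinv htop hc
      rw [gammaRel_zero] at hc
      subst hc
      have h1 : Subgroup.closure ({a} : Set Γ₂) = ⊤ := by
        refine le_antisymm le_top ?_
        rw [← htop]
        apply Subgroup.closure_le _ |>.mpr
        rintro g (hg | rfl)
        · rw [Subgroup.coe_bot, Set.mem_singleton_iff] at hg
          rw [hg]; exact one_mem _
        · exact Subgroup.subset_closure rfl
      have hcomm : ∀ x y : Γ₂, Commute x y := by
        intro x y
        have hx : x ∈ Subgroup.closure ({a} : Set Γ₂) := h1 ▸ Subgroup.mem_top x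
        have hy : y ∈ Subgroup.closure ({a} : Set Γ₂) := h1 ▸ Subgroup.mem_top y
        rcases Subgroup.mem_closure_singleton.mp hx with ⟨mx, rfl⟩
        rcases Subgroup.mem_closure_singleton.mp hy with ⟨my, rfl⟩
        exact Commute.zpow_zpow (Commute.refl a) mx my
      refine Subgroup.nilpotent_iff_lowerCentralSeries.mpr ⟨1, ?_⟩
      have : Subgroup.lowerCentralSeries (⊤ : Subgroup Γ₂) 1 = ⁅(⊤ : Subgroup Γ₂), ⊤⁆ := rfl
      rw [this, eq_bot_iff, Subgroup.commutator_le]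
      intro p _ q _
      rw [Subgroup.mem_bot]
      exact (hcomm p q).commutator_eq
  | succ c IH =>
      intro Γ₂ _ hE B a hfg hinv htop hc
      set A := gammaRel B c with hA
      have hAB : A ≤ B := gammaRel_le B c
      have hABcomm : ∀ x ∈ A, ∀ b ∈ B, x * b = b * x := by
        intro x hx b hb
        have : ⁅x, b⁆ ∈ gammaRel B (c+1) := Subgroup.commutator_mem_commutator hx hb
        rw [hc, Subgroup.mem_bot] at this
        exact commutatorElement_eq_one_iff_mul_comm.mp this
      have hAcomm : ∀ x ∈ A, ∀ y ∈ A, x * y = y * x := fun x hx y hy => hABcomm x hx y (hAB hy)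
      have hAa : ConjStable a A := gammaRel_conjStable hinv c
      have hAstable : ∀ g ∈ (B : Set Γ₂) ∪ {a}, ConjStable g A := by
        rintro g (hg | rfl)
        · exact gammaRel_conjStable (conjStable_self hg) c
        · exact hAa
      haveI hAnormal : A.Normal := normal_of_closure_conjStable htop hAstable
      have hconjA : ∀ x ∈ A, a⁻¹ * x * a ∈ A := by
        intro x hx
        have := hAa.inv x
        rw [show a⁻¹ * x * a⁻¹⁻¹ = a⁻¹ * x * a by group] at this
        exact this.mpr hx
      -- Pass to the quotient by A and use the induction hypothesis.
      set π := QuotientGroup.mk' A with hπ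
      have hπsurj : Function.Surjective π := QuotientGroup.mk'_surjective A
      have hkerπ : π.ker = A := QuotientGroup.ker_mk' A
      have hmemB' : ∀ x : Γ₂, π x ∈ B.map π ↔ x ∈ B := by
        intro x
        constructor
        · rintro ⟨b, hb, hbx⟩
          rcases (QuotientGroup.mk'_eq_mk' A).mp hbx with ⟨z, hz, rfl⟩
          exact mul_mem hb (hAB hz)
        · intro hx; exact ⟨x, hx, rfl⟩
      have hE' : ∀ x y : Γ₂ ⧸ A, ∃ n, engelComm x y n = 1 := by
        intro x y
        rcases hπsurj x with ⟨x, rfl⟩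
        rcases hπsurj y with ⟨y, rfl⟩
        rcases hE x y with ⟨n, hn⟩
        exact ⟨n, by rw [← map_engelComm π, hn, map_one]⟩
      have hinv' : ConjStable (π a) (B.map π) := by
        intro x
        rcases hπsurj x with ⟨x, rfl⟩
        rw [show π a * π x * (π a)⁻¹ = π (a * x * a⁻¹) by rw [map_mul, map_mul, map_inv]]
        rw [hmemB', hmemB']
        exact hinv x
      have htop' : Subgroup.closure ((B.map π : Set (Γ₂ ⧸ A)) ∪ {π a}) = ⊤ := by
        have h2 : Subgroup.map π (Subgroup.closure ((B : Set Γ₂) ∪ {a})) = ⊤ := by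
          rw [htop]
          exact Subgroup.map_top_of_surjective π hπsurj
        rw [MonoidHom.map_closure, Set.image_union, Set.image_singleton] at h2
        rw [← h2, Subgroup.coe_map]
      have hc' : gammaRel (B.map π) c = ⊥ := by
        rw [← map_gammaRel, ← hA, Subgroup.map_eq_bot_iff, hkerπ]
      have hnilQ : Group.IsNilpotent (Γ₂ ⧸ A) :=
        IH (Γ₂ ⧸ A) _ hE' (B.map π) (π a) (fg_map π hfg) hinv' htop' hc'
      obtain ⟨d, hd⟩ := Subgroup.nilpotent_iff_lowerCentralSeries.mp hnilQ
      have hlcsd : Subgroup.lowerCentralSeries (⊤ : Subgroup Γ₂) d ≤ A := by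
        intro x hx
        have h2 : π x ∈ Subgroup.lowerCentralSeries (⊤ : Subgroup (Γ₂ ⧸ A)) d :=
          Subgroup.lowerCentralSeries.map π d ⟨x, hx, rfl⟩
        rw [hd, Subgroup.mem_bot] at h2
        rw [← hkerπ]; exact h2
      -- A is finitely generated, by the generation lemma.
      obtain ⟨X, hXc, hXfin⟩ := (Subgroup.fg_iff B).mp hfg
      have hAclos : A = Subgroup.closure (Cset X c) := gammaRel_last_eq_closure hXc hc
      set W := Cset X c with hW
      have hWfin : W.Finite := Cset_finite hXfin c
      classical
      -- uniform Engel length on A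
      set nw : Γ₂ → ℕ := fun w => Classical.choose (hE w a) with hnw
      have hnwspec : ∀ w : Γ₂, engelComm w a (nw w) = 1 := fun w => Classical.choose_spec (hE w a)
      set m : ℕ := hWfin.toFinset.sup nw with hm
      have hWm : ∀ w ∈ W, engelComm w a m = 1 := fun w hw =>
        engelComm_eq_one_of_le (hnwspec w) (Finset.le_sup (hWfin.mem_toFinset.mpr hw))
      -- iterated commutators with a stay in A and behave multiplicatively
      have hmemAe : ∀ x ∈ A, ∀ i : ℕ, engelComm x a i ∈ A := by
        intro x hx i
        induction i with
        | zero => exact hx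
        | succ i ih =>
            rw [engelComm_succ]
            have h1 : a⁻¹ * engelComm x a i * a ∈ A := hconjA _ ih
            rw [show gcomm (engelComm x a i) a
              = (engelComm x a i)⁻¹ * (a⁻¹ * engelComm x a i * a) by simp only [gcomm_def]; group]
            exact mul_mem (inv_mem ih) h1
      have hgmul : ∀ u ∈ A, ∀ v ∈ A, gcomm (u * v) a = gcomm u a * gcomm v a := by
        intro u hu v hv
        have hga : gcomm u a ∈ A := hmemAe u hu 1
        have hva : a⁻¹ * v * a ∈ A := hconjA v hv
        calc gcomm (u * v) a = v⁻¹ * gcomm u a * (a⁻¹ * v * a) := by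
              simp only [gcomm_def]; group
        _ = gcomm u a * v⁻¹ * (a⁻¹ * v * a) := by
              rw [show v⁻¹ * gcomm u a = gcomm u a * v⁻¹ from hAcomm v⁻¹ (inv_mem hv) _ hga]
        _ = gcomm u a * (v⁻¹ * (a⁻¹ * v * a)) := by group
        _ = gcomm u a * gcomm v a := by simp only [gcomm_def]; group
      have hginv : ∀ u ∈ A, gcomm u⁻¹ a = (gcomm u a)⁻¹ := by
        intro u hu
        have := hgmul u⁻¹ (inv_mem hu) u hu
        rw [inv_mul_cancel, gcomm_one_left] at this
        exact eq_inv_of_mul_eq_one_left this.symm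
      have hHOMA : ∀ i : ℕ, ∀ x ∈ A, ∀ y ∈ A,
          engelComm (x * y) a i = engelComm x a i * engelComm y a i := by
        intro i
        induction i with
        | zero => intro x _ y _; rfl
        | succ i ih =>
            intro x hx y hy
            rw [engelComm_succ, engelComm_succ, engelComm_succ, ih x hx y hy]
            exact hgmul _ (hmemAe x hx i) _ (hmemAe y hy i)
      have hHINV : ∀ i : ℕ, ∀ x ∈ A, engelComm x⁻¹ a i = (engelComm x a i)⁻¹ := by
        intro i x hx
        have := hHOMA i x⁻¹ (inv_mem hx) x hx
        rw [inv_mul_cancel, engelComm_one_left] at this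
        exact eq_inv_of_mul_eq_one_left this.symm
      have hAW : W ⊆ (A : Set Γ₂) := by
        rw [hAclos]; exact Subgroup.subset_closure
      have hkill : ∀ x ∈ A, engelComm x a m = 1 := by
        set K : Subgroup Γ₂ :=
          { carrier := {x | x ∈ A ∧ engelComm x a m = 1}
            one_mem' := ⟨one_mem A, engelComm_one_left a m⟩
            mul_mem' := by
              rintro x y ⟨hxA, hx⟩ ⟨hyA, hy⟩
              exact ⟨mul_mem hxA hyA, by rw [hHOMA m x hxA y hyA, hx, hy, one_mul]⟩
            inv_mem' := by
              rintro x ⟨hxA, hx⟩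
              exact ⟨inv_mem hxA, by rw [hHINV m x hxA, hx, inv_one]⟩ }
        have hAK : A ≤ K := by
          rw [hAclos]
          apply Subgroup.closure_le _ |>.mpr
          intro w hw
          exact ⟨hAW hw, hWm w hw⟩
        exact fun x hx => (hAK hx).2
      -- the descending chain below A
      set As : ℕ → Subgroup Γ₂ :=
        fun i => Subgroup.closure {z | ∃ x ∈ A, z = engelComm x a i} with hAs
      have hAs0 : As 0 = A := by
        apply le_antisymm
        · apply Subgroup.closure_le _ |>.mpr
          rintro z ⟨x, hx, rfl⟩
          exact hx
        · intro x hx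
          exact Subgroup.subset_closure ⟨x, hx, rfl⟩
      have hAsA : ∀ i, As i ≤ A := fun i => by
        apply Subgroup.closure_le _ |>.mpr
        rintro z ⟨x, hx, rfl⟩
        exact hmemAe x hx i
      have hAsm : As m = ⊥ := by
        rw [eq_bot_iff]
        apply Subgroup.closure_le _ |>.mpr
        rintro z ⟨x, hx, rfl⟩
        rw [hkill x hx]
        exact Subgroup.one_mem _
      have hconj_e : ∀ (x : Γ₂) (i : ℕ),
          a * engelComm x a i * a⁻¹ = engelComm (a * x * a⁻¹) a i := by
        intro x i
        have h2 := engelComm_conj a⁻¹ x a i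
        rw [inv_inv] at h2
        rw [h2, show a * a * a⁻¹ = a by group]
      have hAsa : ∀ i, ConjStable a (As i) := by
        intro i
        apply conjStable_of_map_eq
        rw [hAs, MonoidHom.map_closure]
        congr 1
        ext z
        constructor
        · rintro ⟨w, ⟨x, hx, rfl⟩, rfl⟩
          exact ⟨a * x * a⁻¹, (hAa x).mpr hx, by rw [← hconj_e]; rfl⟩
        · rintro ⟨x, hx, rfl⟩
          refine ⟨engelComm (a⁻¹ * x * a) a i, ⟨a⁻¹ * x * a, hconjA x hx, rfl⟩, ?_⟩
          rw [conjHom_apply, hconj_e, show a * (a⁻¹ * x * a) * a⁻¹ = x by group]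
      have hAsb : ∀ i, ∀ b ∈ B, ConjStable b (As i) := by
        intro i b hb x
        constructor
        · intro hx
          have hcomm := hABcomm _ (hAsA i hx) b hb
          have : x = b * x * b⁻¹ := by
            calc x = b⁻¹ * (b * x) * (b⁻¹ * b) * b⁻¹ * b := by group
            _ = b⁻¹ * ((b * x * b⁻¹) * b) * b⁻¹ * b := by group
            _ = b⁻¹ * (b * (b * x * b⁻¹)) * b⁻¹ * b := by rw [hcomm]
            _ = b * x * b⁻¹ := by group
          rw [this]; exact hx
        · intro hx
          have hcomm := hABcomm x (hAsA i hx) b hb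
          have : b * x * b⁻¹ = x := by
            calc b * x * b⁻¹ = (b * x) * b⁻¹ := by group
            _ = (x * b) * b⁻¹ := by rw [hcomm]
            _ = x := by group
          rw [this]; exact hx
      have hAsnormal : ∀ i, (As i).Normal := fun i =>
        normal_of_closure_conjStable htop (by
          rintro g (hg | rfl)
          · exact hAsb i g hg
          · exact hAsa i)
      have hGA : ∀ i, ∀ z ∈ As i, gcomm z a ∈ As (i+1) := by
        intro i
        set K : Subgroup Γ₂ :=
          { carrier := {z | z ∈ A ∧ gcomm z a ∈ As (i+1)}
            one_mem' := ⟨one_mem A, by rw [gcomm_one_left]; exact one_mem _⟩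
            mul_mem' := by
              rintro u v ⟨huA, hu⟩ ⟨hvA, hv⟩
              exact ⟨mul_mem huA hvA, by rw [hgmul u huA v hvA]; exact mul_mem hu hv⟩
            inv_mem' := by
              rintro u ⟨huA, hu⟩
              exact ⟨inv_mem huA, by rw [hginv u huA]; exact inv_mem hu⟩ }
        intro z hz
        have hle : As i ≤ K := by
          apply Subgroup.closure_le _ |>.mpr
          rintro w ⟨x, hx, rfl⟩
          refine ⟨hmemAe x hx i, ?_⟩
          rw [← engelComm_succ]
          exact Subgroup.subset_closure ⟨x, hx, rfl⟩
        exact (hle hz).2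
      have hGA' : ∀ i, ∀ z ∈ As i, gcomm z a⁻¹ ∈ As (i+1) := by
        intro i z hz
        rw [gcomm_inv_right]
        exact (hAsa (i+1) ((gcomm z a)⁻¹)).mpr (inv_mem (hGA i z hz))
      have hchain : ∀ i, ∀ z ∈ As i, ∀ t : Γ₂, gcomm z t ∈ As (i+1) := by
        intro i z hz t
        haveI := hAsnormal (i+1)
        set E : Subgroup Γ₂ :=
          { carrier := {t | gcomm z t ∈ As (i+1)}
            one_mem' := by
              show gcomm z 1 ∈ As (i+1)
              rw [gcomm_one_right]; exact one_mem _
            mul_mem' := by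
              intro t u ht hu
              show gcomm z (t * u) ∈ As (i+1)
              rw [gcomm_mul_right]
              refine mul_mem hu ?_
              have := (hAsnormal (i+1)).conj_mem _ ht u⁻¹
              rwa [show u⁻¹ * gcomm z t * u⁻¹⁻¹ = u⁻¹ * gcomm z t * u by group] at this
            inv_mem' := by
              intro t ht
              show gcomm z t⁻¹ ∈ As (i+1)
              rw [gcomm_inv_right]
              exact (hAsnormal (i+1)).conj_mem _ (inv_mem ht) t }
        have hTE : Subgroup.closure ((B : Set Γ₂) ∪ {a}) ≤ E := by
          apply Subgroup.closure_le _ |>.mpr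
          rintro g (hg | rfl)
          · show gcomm z g ∈ As (i+1)
            rw [gcomm_eq_one_of_commute (hABcomm z (hAsA i hz) g hg)]
            exact one_mem _
          · exact hGA i z hz
        rw [htop] at hTE
        exact hTE (Subgroup.mem_top t)
      have hfinal : ∀ i, Subgroup.lowerCentralSeries (⊤ : Subgroup Γ₂) (d + i) ≤ As i := by
        intro i
        induction i with
        | zero => rw [Nat.add_zero, hAs0]; exact hlcsd
        | succ i ih =>
            have hstep : Subgroup.lowerCentralSeries (⊤ : Subgroup Γ₂) (d + i + 1)
              = ⁅Subgroup.lowerCentralSeries (⊤ : Subgroup Γ₂) (d + i), ⊤⁆ := rfl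
            rw [show d + (i+1) = d + i + 1 from rfl, hstep, Subgroup.commutator_le]
            intro p hp q _
            rw [commutatorElement_eq_gcomm]
            exact hchain i p⁻¹ (inv_mem (ih hp)) q⁻¹
      refine Subgroup.nilpotent_iff_lowerCentralSeries.mpr ⟨d + m, ?_⟩
      rw [eq_bot_iff, ← hAsm]
      exact hfinal m

theorem key_outer {Γ : Type u} [Group Γ]
    (hE : ∀ x y : Γ, ∃ n, engelComm x y n = 1)
    (B : Subgroup Γ) (a : Γ) (hfg : B.FG) (hinv : ConjStable a B)
    (hnil : Group.IsNilpotent ↥B) :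
    Group.IsNilpotent ↥(Subgroup.closure ((B : Set Γ) ∪ {a})) := by
  set M := Subgroup.closure ((B : Set Γ) ∪ {a}) with hM
  have hBM : B ≤ M := by
    intro x hx
    exact Subgroup.subset_closure (Or.inl hx)
  have haM : a ∈ M := Subgroup.subset_closure (Or.inr rfl)
  set B₀ : Subgroup ↥M := B.subgroupOf M with hB₀
  set a₀ : ↥M := ⟨a, haM⟩ with ha₀
  have hcoeB₀ : (M.subtype : ↥M →* Γ) '' (B₀ : Set ↥M) = (B : Set Γ) := by
    have := map_subgroupOf_of_le hBM
    calc (M.subtype : ↥M →* Γ) '' (B₀ : Set ↥M) = ((B₀.map M.subtype : Subgroup Γ) : Set Γ) := by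
          rw [Subgroup.coe_map]
    _ = (B : Set Γ) := by rw [this]
  have hE₀ : ∀ x y : ↥M, ∃ n, engelComm x y n = 1 := by
    intro x y
    rcases hE (x : Γ) (y : Γ) with ⟨n, hn⟩
    refine ⟨n, ?_⟩
    apply Subtype.ext
    rw [show ((engelComm x y n : ↥M) : Γ) = M.subtype (engelComm x y n) from rfl]
    rw [map_engelComm]
    exact hn
  have hfg₀ : B₀.FG := fg_subgroupOf hBM hfg
  have hinv₀ : ConjStable a₀ B₀ := by
    intro x
    rw [Subgroup.mem_subgroupOf, Subgroup.mem_subgroupOf]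
    exact hinv (x : Γ)
  have htop₀ : Subgroup.closure ((B₀ : Set ↥M) ∪ {a₀}) = ⊤ := by
    apply Subgroup.map_injective M.subtype_injective
    rw [MonoidHom.map_closure, Set.image_union, Set.image_singleton, hcoeB₀]
    rw [← MonoidHom.range_eq_map, Subgroup.range_subtype]
    exact hM.symm
  have hnil₀ : Group.IsNilpotent ↥B₀ :=
    (Group.isNilpotent_congr (Subgroup.subgroupOfEquivOfLe hBM)).mpr hnil
  obtain ⟨c, hc⟩ := (isNilpotent_iff_gammaRel B₀).mp hnil₀
  exact key_inner c ↥M inferInstance hE₀ B₀ a₀ hfg₀ hinv₀ htop₀ hc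

/-- Gruenberg's lemma: adjoining an Engel element to finitely many elements of an
invariant locally nilpotent subgroup generates a nilpotent group. -/
theorem lemmaC {Γ : Type u} [Group Γ]
    (hE : ∀ x y : Γ, ∃ n, engelComm x y n = 1)
    (N : Subgroup Γ) (hLN : ∀ U : Subgroup Γ, U ≤ N → U.FG → Group.IsNilpotent ↥U)
    (a : Γ) (hNa : ConjStable a N)
    (S : Set Γ) (hSfin : S.Finite) (hSN : S ⊆ (N : Set Γ)) :
    Group.IsNilpotent ↥(Subgroup.closure (S ∪ {a})) := by
  classical
  set nw : Γ → ℕ := fun s => Classical.choose (hE s a) with hnw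
  have hnwspec : ∀ s : Γ, engelComm s a (nw s) = 1 := fun s => Classical.choose_spec (hE s a)
  set Y : Set Γ := ⋃ s ∈ S, (fun i => engelComm s a i) '' (Set.Iio (nw s)) with hY
  have hYfin : Y.Finite := Set.Finite.biUnion hSfin (fun s _ => (Set.finite_Iio _).image _)
  set B := Subgroup.closure Y with hB
  have hEsB : ∀ s ∈ S, ∀ i : ℕ, engelComm s a i ∈ B := by
    intro s hs i
    rcases Nat.lt_or_ge i (nw s) with h | h
    · exact Subgroup.subset_closure (Set.mem_biUnion hs ⟨i, h, rfl⟩)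
    · rw [engelComm_eq_one_of_le (hnwspec s) h]; exact one_mem _
  have hSB : S ⊆ (B : Set Γ) := by
    intro s hs
    have := hEsB s hs 0
    rwa [engelComm_zero] at this
  have hmemN : ∀ s ∈ S, ∀ i : ℕ, engelComm s a i ∈ N := by
    intro s hs i
    induction i with
    | zero => exact hSN hs
    | succ i ih =>
        rw [engelComm_succ, show gcomm (engelComm s a i) a
          = (engelComm s a i)⁻¹ * (a⁻¹ * engelComm s a i * a) by simp only [gcomm_def]; group]
        refine mul_mem (inv_mem ih) ?_
        have := hNa.inv (engelComm s a i)
        rw [show a⁻¹ * engelComm s a i * a⁻¹⁻¹ = a⁻¹ * engelComm s a i * a by group] at this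
        exact this.mpr ih
  have hBN : B ≤ N := by
    apply Subgroup.closure_le _ |>.mpr
    intro y hy
    simp only [hY, Set.mem_iUnion, Set.mem_image, Set.mem_Iio] at hy
    rcases hy with ⟨s, hs, i, _, rfl⟩
    exact hmemN s hs i
  -- stability of B under conjugation by a⁻¹ (forward direction)
  have hfwd : ∀ x ∈ B, a⁻¹ * x * a ∈ B := by
    set K : Subgroup Γ :=
      { carrier := {x | x ∈ B ∧ a⁻¹ * x * a ∈ B}
        one_mem' := ⟨one_mem B, by rw [show a⁻¹ * 1 * a = 1 by group]; exact one_mem B⟩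
        mul_mem' := by
          rintro x y ⟨hxB, hx⟩ ⟨hyB, hy⟩
          refine ⟨mul_mem hxB hyB, ?_⟩
          rw [show a⁻¹ * (x * y) * a = (a⁻¹ * x * a) * (a⁻¹ * y * a) by group]
          exact mul_mem hx hy
        inv_mem' := by
          rintro x ⟨hxB, hx⟩
          refine ⟨inv_mem hxB, ?_⟩
          rw [show a⁻¹ * x⁻¹ * a = (a⁻¹ * x * a)⁻¹ by group]
          exact inv_mem hx }
    have hYK : Y ⊆ (K : Set Γ) := by
      intro y hy
      simp only [hY, Set.mem_iUnion, Set.mem_image, Set.mem_Iio] at hy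
      rcases hy with ⟨s, hs, i, _, rfl⟩
      refine ⟨hEsB s hs i, ?_⟩
      rw [conj_eq_mul_gcomm, ← engelComm_succ]
      exact mul_mem (hEsB s hs i) (hEsB s hs (i+1))
    have : B ≤ K := Subgroup.closure_le _ |>.mpr hYK
    exact fun x hx => (this hx).2
  -- stability in the other direction, by downward recursion
  have hbwd_gen : ∀ s ∈ S, ∀ k i : ℕ, nw s ≤ i + k → a * engelComm s a i * a⁻¹ ∈ B := by
    intro s hs k
    induction k with
    | zero =>
        intro i hi
        rw [engelComm_eq_one_of_le (hnwspec s) (by omega : nw s ≤ i)]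
        rw [show a * 1 * a⁻¹ = 1 by group]
        exact one_mem _
    | succ k ih =>
        intro i hi
        rcases le_or_gt (nw s) (i + k) with h | h
        · exact ih i h
        · have h0 : a⁻¹ * engelComm s a i * a = engelComm s a i * engelComm s a (i+1) := by
            rw [conj_eq_mul_gcomm, ← engelComm_succ]
          have h1 : engelComm s a i
              = (a * engelComm s a i * a⁻¹) * (a * engelComm s a (i+1) * a⁻¹) := by
            calc engelComm s a i = a * (a⁻¹ * engelComm s a i * a) * a⁻¹ := by group
            _ = a * (engelComm s a i * engelComm s a (i+1)) * a⁻¹ := by rw [h0]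
            _ = (a * engelComm s a i * a⁻¹) * (a * engelComm s a (i+1) * a⁻¹) := by group
          have h2 : a * engelComm s a i * a⁻¹
              = engelComm s a i * (a * engelComm s a (i+1) * a⁻¹)⁻¹ :=
            eq_mul_inv_iff_mul_eq.mpr h1.symm
          rw [h2]
          have h3 : a * engelComm s a (i+1) * a⁻¹ ∈ B := ih (i+1) (by omega)
          exact mul_mem (hEsB s hs i) (inv_mem h3)
  have hbwd : ∀ x ∈ B, a * x * a⁻¹ ∈ B := by
    set K : Subgroup Γ :=
      { carrier := {x | x ∈ B ∧ a * x * a⁻¹ ∈ B}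
        one_mem' := ⟨one_mem B, by rw [show a * 1 * a⁻¹ = 1 by group]; exact one_mem B⟩
        mul_mem' := by
          rintro x y ⟨hxB, hx⟩ ⟨hyB, hy⟩
          refine ⟨mul_mem hxB hyB, ?_⟩
          rw [show a * (x * y) * a⁻¹ = (a * x * a⁻¹) * (a * y * a⁻¹) by group]
          exact mul_mem hx hy
        inv_mem' := by
          rintro x ⟨hxB, hx⟩
          refine ⟨inv_mem hxB, ?_⟩
          rw [show a * x⁻¹ * a⁻¹ = (a * x * a⁻¹)⁻¹ by group]
          exact inv_mem hx }
    have hYK : Y ⊆ (K : Set Γ) := by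
      intro y hy
      simp only [hY, Set.mem_iUnion, Set.mem_image, Set.mem_Iio] at hy
      rcases hy with ⟨s, hs, i, _, rfl⟩
      exact ⟨hEsB s hs i, hbwd_gen s hs (nw s) i (Nat.le_add_left _ _)⟩
    have : B ≤ K := Subgroup.closure_le _ |>.mpr hYK
    exact fun x hx => (this hx).2
  have hinvB : ConjStable a B := conjStable_of_forall hbwd hfwd
  have hfgB : B.FG := (Subgroup.fg_iff B).mpr ⟨Y, rfl, hYfin⟩
  have hnilB : Group.IsNilpotent ↥B := hLN B hBN hfgB
  have hMnil := key_outer hE B a hfgB hinvB hnilB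
  have hle : Subgroup.closure (S ∪ {a}) ≤ Subgroup.closure ((B : Set Γ) ∪ {a}) :=
    Subgroup.closure_mono (Set.union_subset_union_left _ hSB)
  exact isNilpotent_of_le hle hMnil

/-- The core case: a finitely generated group with locally-nilpotent "derived part". -/
theorem core {Γ : Type u} [Group Γ]
    (hE : ∀ x y : Γ, ∃ n, engelComm x y n = 1)
    (Λ W : Subgroup Γ) (hfg : Λ.FG)
    (hnorm : ∀ l ∈ Λ, ∀ w ∈ W, l * w * l⁻¹ ∈ W)
    (habl : ∀ x ∈ Λ, ∀ y ∈ Λ, gcomm x y ∈ W)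
    (hLN : ∀ U : Subgroup Γ, U ≤ W → U.FG → Group.IsNilpotent ↥U) :
    Group.IsNilpotent ↥Λ := by
  classical
  have main : ∀ F : Finset Γ, (F : Set Γ) ⊆ (Λ : Set Γ) →
      ∀ U : Subgroup Γ, U ≤ W ⊔ Subgroup.closure (F : Set Γ) → U.FG →
      Group.IsNilpotent ↥U := by
    intro F
    induction F using Finset.induction_on with
    | empty =>
        intro _ U hU hUfg
        rw [Finset.coe_empty, Subgroup.closure_empty, sup_bot_eq] at hU
        exact hLN U hU hUfg
    | @insert x F hxF ih =>
        intro hFΛ U hU hUfg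
        have hxΛ : x ∈ Λ := hFΛ (Finset.mem_coe.mpr (Finset.mem_insert_self x F))
        have hF'Λ : (F : Set Γ) ⊆ (Λ : Set Γ) := fun y hy =>
          hFΛ (Finset.mem_coe.mpr (Finset.mem_insert_of_mem (Finset.mem_coe.mp hy)))
        set P := W ⊔ Subgroup.closure (F : Set Γ) with hP
        have hrw : W ⊔ Subgroup.closure ((insert x F : Finset Γ) : Set Γ)
            = P ⊔ Subgroup.closure ({x} : Set Γ) := by
          rw [Finset.coe_insert, Set.insert_eq, Subgroup.closure_union, hP]
          rw [← sup_assoc, sup_comm W (Subgroup.closure {x}), sup_assoc, sup_comm]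
        rw [hrw] at hU
        -- P is normalized by Λ
        have hPnorm : ∀ l ∈ Λ, ∀ p ∈ P, l * p * l⁻¹ ∈ P := by
          intro l hl
          have hsub : P ≤ P.comap (conjHom l) := by
            rw [hP]
            apply sup_le
            · intro w hw
              exact Subgroup.mem_comap.mpr
                ((le_sup_left : W ≤ P) (hnorm l hl w hw))
            · apply Subgroup.closure_le _ |>.mpr
              intro f hf
              apply Subgroup.mem_comap.mpr
              have hid := conj_eq_mul_gcomm f l⁻¹
              rw [inv_inv] at hid
              rw [conjHom_apply, hid]
              refine mul_mem ((le_sup_right : Subgroup.closure (F : Set Γ) ≤ P)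
                (Subgroup.subset_closure hf)) ?_
              exact (le_sup_left : W ≤ P) (habl f (hF'Λ hf) l⁻¹ (inv_mem hl))
          exact fun p hp => Subgroup.mem_comap.mp (hsub hp)
        have hPstab : ∀ l ∈ Λ, ConjStable l P := by
          intro l hl
          refine conjStable_of_forall (hPnorm l hl) (fun p hp => ?_)
          have := hPnorm l⁻¹ (inv_mem hl) p hp
          rwa [inv_inv] at this
        -- decomposition of elements of P ⊔ ⟨x⟩
        have hdecomp : ∀ g ∈ P ⊔ Subgroup.closure ({x} : Set Γ),
            ∃ p, p ∈ P ∧ ∃ m : ℤ, g = p * x ^ m := by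
          set R : Subgroup Γ :=
            { carrier := {g | ∃ p, p ∈ P ∧ ∃ m : ℤ, g = p * x ^ m}
              one_mem' := ⟨1, one_mem P, 0, by rw [zpow_zero, mul_one]⟩
              mul_mem' := by
                rintro g h ⟨p, hp, mp, rfl⟩ ⟨q, hq, mq, rfl⟩
                refine ⟨p * (x ^ mp * q * (x ^ mp)⁻¹), ?_, mp + mq, ?_⟩
                · exact mul_mem hp (hPnorm _ (zpow_mem hxΛ mp) q hq)
                · rw [zpow_add]; group
              inv_mem' := by
                rintro g ⟨p, hp, mp, rfl⟩
                refine ⟨(x ^ mp)⁻¹ * p⁻¹ * x ^ mp, ?_, -mp, ?_⟩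
                · have := hPnorm _ (inv_mem (zpow_mem hxΛ mp)) p⁻¹ (inv_mem hp)
                  rwa [inv_inv] at this
                · rw [zpow_neg]; group }
          intro g hg
          have : P ⊔ Subgroup.closure ({x} : Set Γ) ≤ R := by
            apply sup_le
            · intro p hp
              exact ⟨p, hp, 0, by rw [zpow_zero, mul_one]⟩
            · apply Subgroup.closure_le _ |>.mpr
              rintro y rfl
              exact ⟨1, one_mem P, 1, by rw [zpow_one, one_mul]⟩
          exact this hg
        -- split the generators of U
        obtain ⟨T, hTc⟩ := hUfg
        set pf : Γ → Γ := fun u =>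
          if h : ∃ p, p ∈ P ∧ ∃ m : ℤ, u = p * x ^ m then Classical.choose h else 1 with hpf
        have hpfP : ∀ u ∈ U, pf u ∈ P ∧ ∃ m : ℤ, u = pf u * x ^ m := by
          intro u hu
          have hex : ∃ p, p ∈ P ∧ ∃ m : ℤ, u = p * x ^ m := hdecomp u (hU hu)
          have heq : pf u = Classical.choose hex := by rw [hpf]; exact dif_pos hex
          rw [heq]
          exact Classical.choose_spec hex
        have hUle : U ≤ Subgroup.closure (((T.image pf : Finset Γ) : Set Γ) ∪ {x}) := by
          rw [← hTc]
          apply Subgroup.closure_le _ |>.mpr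
          intro u hu
          have huU : u ∈ U := hTc ▸ Subgroup.subset_closure hu
          obtain ⟨hpP, m, hm⟩ := hpfP u huU
          rw [hm]
          have hxmem : x ∈ Subgroup.closure (((T.image pf : Finset Γ) : Set Γ) ∪ {x}) :=
            Subgroup.subset_closure (Or.inr rfl)
          refine mul_mem ?_ (zpow_mem hxmem m)
          exact Subgroup.subset_closure
            (Or.inl (Finset.mem_coe.mpr (Finset.mem_image_of_mem pf hu)))
        have hSP : ((T.image pf : Finset Γ) : Set Γ) ⊆ (P : Set Γ) := by
          intro p hp
          rcases Finset.mem_image.mp (Finset.mem_coe.mp hp) with ⟨u, hu, rfl⟩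
          exact (hpfP u (hTc ▸ Subgroup.subset_closure hu)).1
        have hnil := lemmaC hE P (ih hF'Λ) x (hPstab x hxΛ)
          ((T.image pf : Finset Γ) : Set Γ) (T.image pf).finite_toSet hSP
        exact isNilpotent_of_le hUle hnil
  obtain ⟨T0, hT0⟩ := id hfg
  have hT0Λ : (T0 : Set Γ) ⊆ (Λ : Set Γ) := fun y hy => hT0 ▸ Subgroup.subset_closure hy
  have hΛle : Λ ≤ W ⊔ Subgroup.closure (T0 : Set Γ) := by
    rw [← hT0]
    exact le_sup_right
  exact main T0 hT0Λ Λ hΛle hfg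

/-- Main induction: if `K` is f.g., `W` is `K`-invariant and locally nilpotent,
and the relative lower central series of `K` reaches `W` in `c` steps, then `K`
is nilpotent. -/
theorem thm2 {Γ : Type u} [Group Γ]
    (hE : ∀ x y : Γ, ∃ n, engelComm x y n = 1) :
    ∀ (c : ℕ) (K W : Subgroup Γ), K.FG →
    (∀ k ∈ K, ∀ w ∈ W, k * w * k⁻¹ ∈ W) →
    (∀ U : Subgroup Γ, U ≤ W → U.FG → Group.IsNilpotent ↥U) →
    gammaRel K c ≤ W → Group.IsNilpotent ↥K := by
  intro c
  induction c with
  | zero =>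
      intro K W hfg _ hLN hγ
      exact hLN K hγ hfg
  | succ c IH =>
      intro K W hfg hnorm hLN hγ
      set V : Subgroup Γ :=
        { carrier := {x | x ∈ K ∧ ∀ y ∈ K, gcomm x y ∈ W}
          one_mem' := ⟨one_mem K, fun y _ => by rw [gcomm_one_left]; exact one_mem W⟩
          mul_mem' := by
            rintro x₁ x₂ ⟨hx₁K, hx₁⟩ ⟨hx₂K, hx₂⟩
            refine ⟨mul_mem hx₁K hx₂K, fun y hy => ?_⟩
            rw [gcomm_mul_left]
            refine mul_mem ?_ (hx₂ y hy)
            have := hnorm x₂⁻¹ (inv_mem hx₂K) _ (hx₁ y hy)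
            rwa [inv_inv] at this
          inv_mem' := by
            rintro x ⟨hxK, hx⟩
            refine ⟨inv_mem hxK, fun y hy => ?_⟩
            rw [gcomm_inv_left]
            exact hnorm x hxK _ (inv_mem (hx y hy)) } with hV
      have hVK : V ≤ K := fun x hx => hx.1
      have hnormV : ∀ k ∈ K, ∀ v ∈ V, k * v * k⁻¹ ∈ V := by
        intro k hk v hv
        refine ⟨mul_mem (mul_mem hk hv.1) (inv_mem hk), fun y hy => ?_⟩
        have hid : gcomm (k * v * k⁻¹) y = k * gcomm v (k⁻¹ * y * k) * k⁻¹ := by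
          have h2 := gcomm_conj k⁻¹ v (k⁻¹ * y * k)
          rw [inv_inv] at h2
          rw [show k * (k⁻¹ * y * k) * k⁻¹ = y by group] at h2
          rw [← h2]
        rw [hid]
        exact hnorm k hk _ (hv.2 _ (mul_mem (mul_mem (inv_mem hk) hy) hk))
      have hγV : gammaRel K c ≤ V := by
        intro x hx
        refine ⟨gammaRel_le K c hx, fun y hy => ?_⟩
        rw [show gcomm x y = ⁅x⁻¹, y⁻¹⁆ by rw [commutatorElement_eq_gcomm]; simp]
        exact hγ (Subgroup.commutator_mem_commutator (inv_mem hx) (inv_mem hy))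
      have hLNV : ∀ U : Subgroup Γ, U ≤ V → U.FG → Group.IsNilpotent ↥U := by
        intro U hUV hUfg
        apply core hE U (W ⊓ U) hUfg
        · intro l hl w hw
          rcases Subgroup.mem_inf.mp hw with ⟨hwW, hwU⟩
          exact Subgroup.mem_inf.mpr
            ⟨hnorm l (hVK (hUV hl)) w hwW, mul_mem (mul_mem hl hwU) (inv_mem hl)⟩
        · intro x hx y hy
          exact Subgroup.mem_inf.mpr ⟨(hUV hx).2 y (hVK (hUV hy)), gcomm_mem hx hy⟩
        · intro U' hU' hU'fg
          exact hLN U' (hU'.trans inf_le_left) hU'fg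
      exact IH K V hfg hnormV hLNV hγV

end EngelProof

theorem locallyNilpotent_of_engel_extension {G : Type*} [Group G]
    (H : Subgroup G) [H.Normal]
    (hH : IsLocallyNilpotent H) (hQ : IsLocallyNilpotent (G ⧸ H))
    (hEngel : ∀ x y : G, ∃ n : ℕ, 1 ≤ n ∧ engelComm x y n = 1) :
    IsLocallyNilpotent G := by
  intro K hKfg
  have hE : ∀ x y : G, ∃ n, engelComm x y n = 1 := by
    intro x y
    rcases hEngel x y with ⟨n, _, hn⟩
    exact ⟨n, hn⟩
  set π := QuotientGroup.mk' H with hπ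
  have hK'fg : (K.map π).FG := EngelProof.fg_map π hKfg
  have hnilK' : Group.IsNilpotent ↥(K.map π) := hQ _ hK'fg
  obtain ⟨c, hc⟩ := (EngelProof.isNilpotent_iff_gammaRel _).mp hnilK'
  have hγH : EngelProof.gammaRel K c ≤ H := by
    intro x hx
    have h1 : π x ∈ EngelProof.gammaRel (K.map π) c := by
      rw [← EngelProof.map_gammaRel]
      exact ⟨x, hx, rfl⟩
    rw [hc, Subgroup.mem_bot] at h1
    have h2 : x ∈ π.ker := h1
    rwa [QuotientGroup.ker_mk'] at h2
  have hnormH : ∀ k ∈ K, ∀ w ∈ H, k * w * k⁻¹ ∈ H := fun k _ w hw =>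
    Subgroup.Normal.conj_mem ‹H.Normal› w hw k
  have hLNH : ∀ U : Subgroup G, U ≤ H → U.FG → Group.IsNilpotent ↥U := by
    intro U hUH hUfg
    have h1 : (U.subgroupOf H).FG := EngelProof.fg_subgroupOf hUH hUfg
    have h2 : Group.IsNilpotent ↥(U.subgroupOf H) := hH _ h1
    exact (Group.isNilpotent_congr (Subgroup.subgroupOfEquivOfLe hUH)).mp h2
  exact EngelProof.thm2 hE c K H hKfg hnormH hLNH hγH
end

section
/- For every integer n ≥ 1, the word Wₙ(x₁,…,x_{n+1}), defined by W₁ = [x₁,x₂,x₁,x₂] and Wₙ = [W_{n-1}, x_{n+1}, W_{n-1}, x_{n+1}], lies in the (2^{n+1} + 2ⁿ − 2)-th term of the lower central series of the free group on x₁, x₂, … -/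
open Subgroup


/-- The words `Wₙ`: `W₁(x₁,x₂) = [x₁,x₂,x₁,x₂]`,
`Wₙ = [W_{n-1}, x_{n+1}, W_{n-1}, x_{n+1}]`. -/
def wordW {G : Type*} [Group G] : ℕ → (ℕ → G) → G
  | 0, _ => 1
  | 1, x => gcomm (gcomm (gcomm (x 1) (x 2)) (x 1)) (x 2)
  | n + 2, x => gcomm (gcomm (gcomm (wordW (n + 1) x) (x (n + 3))) (wordW (n + 1) x)) (x (n + 3))


/-- Three subgroups lemma relative to a normal subgroup. -/
theorem three_subgroups' {G : Type*} [Group G] {A B C N : Subgroup G} [N.Normal]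
    (h1 : ⁅⁅B, C⁆, A⁆ ≤ N) (h2 : ⁅⁅C, A⁆, B⁆ ≤ N) : ⁅⁅A, B⁆, C⁆ ≤ N := by
  let f := QuotientGroup.mk' N
  have key : ⁅⁅A.map f, B.map f⁆, C.map f⁆ = ⊥ := by
    apply commutator_commutator_eq_bot_of_rotate
    · rw [← map_commutator, ← map_commutator, Subgroup.map_eq_bot_iff,
        QuotientGroup.ker_mk']
      exact h1
    · rw [← map_commutator, ← map_commutator, Subgroup.map_eq_bot_iff,
        QuotientGroup.ker_mk']
      exact h2
  rw [← map_commutator, ← map_commutator, Subgroup.map_eq_bot_iff,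
    QuotientGroup.ker_mk'] at key
  exact key

theorem lcs_comm_le {G : Type*} [Group G] :
    ∀ n m : ℕ, ⁅(⊤ : Subgroup G).lowerCentralSeries m, (⊤ : Subgroup G).lowerCentralSeries n⁆ ≤
      (⊤ : Subgroup G).lowerCentralSeries (m + n + 1)
  | 0, m => by
      exact le_rfl
  | n + 1, m => by
      rw [show (⊤ : Subgroup G).lowerCentralSeries (n + 1) = ⁅(⊤ : Subgroup G).lowerCentralSeries n, ⊤⁆ from rfl,
        commutator_comm]
      apply three_subgroups'
      · calc ⁅⁅(⊤ : Subgroup G), (⊤ : Subgroup G).lowerCentralSeries m⁆, (⊤ : Subgroup G).lowerCentralSeries n⁆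
            ≤ ⁅(⊤ : Subgroup G).lowerCentralSeries (m + 1), (⊤ : Subgroup G).lowerCentralSeries n⁆ := by
              apply commutator_mono _ le_rfl
              rw [commutator_comm]
              exact le_rfl
          _ ≤ (⊤ : Subgroup G).lowerCentralSeries (m + 1 + n + 1) := lcs_comm_le n (m + 1)
          _ = (⊤ : Subgroup G).lowerCentralSeries (m + (n + 1) + 1) := by ring_nf
      · calc ⁅⁅(⊤ : Subgroup G).lowerCentralSeries m, (⊤ : Subgroup G).lowerCentralSeries n⁆, (⊤ : Subgroup G)⁆
            ≤ ⁅(⊤ : Subgroup G).lowerCentralSeries (m + n + 1), (⊤ : Subgroup G)⁆ :=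
              commutator_mono (lcs_comm_le n m) le_rfl
          _ = (⊤ : Subgroup G).lowerCentralSeries (m + n + 2) := rfl
          _ = (⊤ : Subgroup G).lowerCentralSeries (m + (n + 1) + 1) := by ring_nf

open scoped commutatorElement in
theorem gcomm_mem_lcs {G : Type*} [Group G] {a b : G} {m n : ℕ}
    (ha : a ∈ (⊤ : Subgroup G).lowerCentralSeries m) (hb : b ∈ (⊤ : Subgroup G).lowerCentralSeries n) :
    gcomm a b ∈ (⊤ : Subgroup G).lowerCentralSeries (m + n + 1) := by
  have : gcomm a b = ⁅a⁻¹, b⁻¹⁆ := by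
    simp [gcomm, commutatorElement_def]
  rw [this]
  exact lcs_comm_le n m (commutator_mem_commutator (inv_mem ha) (inv_mem hb))

theorem wordW_mem_aux {G : Type*} [Group G] (x : ℕ → G) :
    ∀ n : ℕ, wordW (n + 1) x ∈ (⊤ : Subgroup G).lowerCentralSeries (2 ^ (n + 2) + 2 ^ (n + 1) - 3)
  | 0 => by
      have h0 : gcomm (x 1) (x 2) ∈ (⊤ : Subgroup G).lowerCentralSeries (0 + 0 + 1) :=
        gcomm_mem_lcs (m := 0) (n := 0) (mem_top _) (mem_top _)
      have h1 : gcomm (gcomm (x 1) (x 2)) (x 1) ∈ (⊤ : Subgroup G).lowerCentralSeries (1 + 0 + 1) :=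
        gcomm_mem_lcs (n := 0) h0 (mem_top _)
      have h2 : gcomm (gcomm (gcomm (x 1) (x 2)) (x 1)) (x 2) ∈
          (⊤ : Subgroup G).lowerCentralSeries (2 + 0 + 1) := gcomm_mem_lcs (n := 0) h1 (mem_top _)
      have : (2 : ℕ) ^ (0 + 2) + 2 ^ (0 + 1) - 3 = 2 + 0 + 1 := by norm_num
      rw [this]
      simpa [wordW] using h2
  | n + 1 => by
      have hW := wordW_mem_aux x n
      have h1 : gcomm (wordW (n + 1) x) (x (n + 3)) ∈
          (⊤ : Subgroup G).lowerCentralSeries (2 ^ (n + 2) + 2 ^ (n + 1) - 3 + 0 + 1) :=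
        gcomm_mem_lcs (n := 0) hW (mem_top _)
      have h2 := gcomm_mem_lcs h1 hW
      have h3 := gcomm_mem_lcs (n := 0) h2 (mem_top (x (n + 3)))
      have harith : 2 ^ (n + 2) + 2 ^ (n + 1) - 3 + 0 + 1 +
          (2 ^ (n + 2) + 2 ^ (n + 1) - 3) + 1 + 0 + 1
          = 2 ^ (n + 1 + 2) + 2 ^ (n + 1 + 1) - 3 := by
        have ha : 1 ≤ 2 ^ (n + 1) := Nat.one_le_two_pow
        have e2 : (2 : ℕ) ^ (n + 2) = 2 * 2 ^ (n + 1) := by ring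
        have e3 : (2 : ℕ) ^ (n + 1 + 2) = 4 * 2 ^ (n + 1) := by ring
        have e4 : (2 : ℕ) ^ (n + 1 + 1) = 2 * 2 ^ (n + 1) := by ring
        omega
      rw [harith] at h3
      simpa [wordW] using h3

theorem wordW_mem_lowerCentralSeries (n : ℕ) (hn : 1 ≤ n)
    {G : Type*} [Group G] (x : ℕ → G) :
    wordW n x ∈ (⊤ : Subgroup G).lowerCentralSeries (2 ^ (n + 1) + 2 ^ n - 2 - 1) := by
  obtain ⟨m, rfl⟩ : ∃ m, n = m + 1 := ⟨n - 1, by omega⟩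
  have h := wordW_mem_aux (G := G) x m
  have : 2 ^ (m + 1 + 1) + 2 ^ (m + 1) - 2 - 1 = 2 ^ (m + 2) + 2 ^ (m + 1) - 3 := by
    have ha : 1 ≤ 2 ^ (m + 1) := Nat.one_le_two_pow
    have e : (2 : ℕ) ^ (m + 1 + 1) = 2 ^ (m + 2) := by ring
    omega
  rw [this]
  exact h
end

section
/- Let G be a finite c-Engel p-group, let r be the integer with p^{r−1} < c ≤ p^r, and let H, K be normal subgroups of G with K ≤ H and H/K elementary abelian. Then [H, a^{p^r}] ≤ K for every a ∈ G. -/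
lemma map_gcomm {G H : Type*} [Group G] [Group H] (f : G →* H) (a b : G) :
    f (gcomm a b) = gcomm (f a) (f b) := by simp [gcomm]

lemma map_engelComm {G H : Type*} [Group G] [Group H] (f : G →* H) (x y : G) :
    ∀ n, f (engelComm x y n) = engelComm (f x) (f y) n
  | 0 => rfl
  | n + 1 => by rw [engelComm, map_gcomm, map_engelComm f x y n]; rfl

lemma gcomm_eq_one_comm {G : Type*} [Group G] {a b : G} (h : gcomm a b = 1) :
    a * b = b * a := by
  unfold gcomm at h
  have := congrArg (fun z => b * a * z) h
  simpa [mul_assoc] using this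

lemma key_end {A : Type*} [AddCommGroup A] {p c r : ℕ} (hp : p.Prime)
    (hpx : ∀ x : A, p • x = 0) (f : AddMonoid.End A)
    (hcr : c ≤ p ^ r)
    (hEng : ∀ y : A, ((f - 1) ^ c) y = 0) (x : A) :
    (f ^ (p ^ r)) x = x := by
  set d : AddMonoid.End A := f - 1 with hd
  have hf : f = d + 1 := by simp [hd]
  have hcom : Commute d (1 : AddMonoid.End A) := Commute.one_right d
  rw [hf, hcom.add_pow]
  rw [show ∀ (s : Finset ℕ) (g : ℕ → AddMonoid.End A), (∑ m ∈ s, g m) x = ∑ m ∈ s, g m x from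
    fun s g => by erw [AddMonoidHom.finset_sum_apply]; rfl]
  rw [Finset.sum_eq_single 0]
  · simp [AddMonoid.End.natCast_apply]
  · intro k hk hk0
    simp only [one_pow, mul_one]
    have : (d ^ k * ((p ^ r).choose k : AddMonoid.End A)) x
        = ((p ^ r).choose k) • ((d ^ k) x) := by
      simp [AddMonoid.End.natCast_apply, AddMonoidHom.map_nsmul]
    rw [this]
    rcases le_or_gt c k with hck | hck
    · have : (d ^ k) x = 0 := by
        have : d ^ k = d ^ (k - c) * d ^ c := by
          rw [← pow_add]; congr 1; omega
        rw [this]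
        show (d ^ (k-c)) ((d^c) x) = 0
        rw [hEng x]; simp
      rw [this, smul_zero]
    · have hkne : k ≠ p ^ r := by
        intro h; omega
      obtain ⟨m, hm⟩ : p ∣ (p ^ r).choose k := Nat.Prime.dvd_choose_pow hp hk0 hkne
      rw [hm, mul_comm, mul_nsmul, hpx]
  · intro h; exact absurd (Finset.mem_range.mpr (by positivity)) h

theorem commutator_pow_mem_of_elementaryAbelian_section
    {G : Type*} [Group G] [Finite G] (p c r : ℕ) (hp : p.Prime)
    (hG : IsPGroup p G) (hEngel : ∀ x y : G, engelComm x y c = 1)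
    (hr1 : p ^ (r - 1) < c) (hr2 : c ≤ p ^ r)
    (H K : Subgroup G) [H.Normal] [K.Normal] (hKH : K ≤ H)
    (helemp : ∀ h ∈ H, h ^ p ∈ K)
    (helemab : ∀ h ∈ H, ∀ h' ∈ H, gcomm h h' ∈ K) :
    ∀ a : G, ∀ h ∈ H, gcomm h (a ^ p ^ r) ∈ K := by
  intro a h hh
  set Q := G ⧸ K with hQ
  set π : G →* Q := QuotientGroup.mk' K with hπ
  set A : Subgroup Q := H.map π with hA
  have hπsurj : Function.Surjective π := QuotientGroup.mk'_surjective K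
  haveI : A.Normal := Subgroup.Normal.map ‹H.Normal› π hπsurj
  set aq : Q := π a with haq
  -- commutativity of A inside Q
  have hcommQ : ∀ x ∈ A, ∀ y ∈ A, x * y = y * x := by
    rintro _ ⟨h1, hh1, rfl⟩ _ ⟨h2, hh2, rfl⟩
    have h1' : π (gcomm h1 h2) = 1 := (QuotientGroup.eq_one_iff _).mpr (helemab h1 hh1 h2 hh2)
    rw [map_gcomm] at h1'
    exact gcomm_eq_one_comm h1'
  letI : CommGroup A :=
    { (inferInstance : Group A) with
      mul_comm := fun x y => Subtype.ext (hcommQ x x.2 y y.2) }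
  set σ : MulAut A := MulAut.conjNormal (aq⁻¹) with hσ
  have hσcoe : ∀ x : A, ((σ x : A) : Q) = aq⁻¹ * x * aq := by
    intro x; rw [hσ]; simp
  set f : AddMonoid.End (Additive A) :=
    (MonoidHom.toAdditive σ.toMonoidHom : Additive A →+ Additive A) with hf
  have hfapp : ∀ y : Additive A, f y = Additive.ofMul (σ y.toMul) := fun _ => rfl
  -- (f-1)^n corresponds to engelComm
  have hdpow : ∀ n, ∀ y : Additive A,
      (((((f - 1) ^ n) y).toMul : A) : Q) = engelComm ((y.toMul : A) : Q) aq n := by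
    intro n
    induction n with
    | zero => intro y; rfl
    | succ n ih =>
      intro y0
      rw [pow_succ']
      set y : Additive A := ((f - 1) ^ n) y0 with hy
      have hyval : ((y.toMul : A) : Q) = engelComm ((y0.toMul : A) : Q) aq n := ih y0
      show ((((f - 1) y).toMul : A) : Q) = _
      have e1 : (f - 1) y = f y - y := rfl
      rw [e1]
      have e2 : (f y - y).toMul = (f y).toMul * (y.toMul)⁻¹ := by rw [toMul_sub, div_eq_mul_inv]
      rw [e2, hfapp]
      have hcoe : (((Additive.toMul (Additive.ofMul (σ y.toMul)) : A) * (y.toMul)⁻¹ : A) : Q)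
          = (aq⁻¹ * ((y.toMul : A) : Q) * aq) * ((y.toMul : A) : Q)⁻¹ := by
        push_cast
        rw [toMul_ofMul, ← hσcoe]
      rw [hcoe]
      show _ = gcomm (engelComm ((y0.toMul : A) : Q) aq n) aq
      rw [← hyval]
      set Y : Q := ((y.toMul : A) : Q) with hY
      have hYA : Y ∈ A := (y.toMul).2
      have hσYA : aq⁻¹ * Y * aq ∈ A := by
        have := (σ y.toMul).2
        rwa [hσcoe] at this
      have hc : (aq⁻¹ * Y * aq) * Y⁻¹ = Y⁻¹ * (aq⁻¹ * Y * aq) := by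
        have : Commute (aq⁻¹ * Y * aq) Y := hcommQ _ hσYA _ hYA
        exact this.inv_right.eq
      rw [hc]
      unfold gcomm
      group
  -- f^n corresponds to conjugation by aq^n
  have hpow : ∀ n, ∀ y : Additive A,
      ((((f ^ n) y).toMul : A) : Q) = aq⁻¹ ^ n * ((y.toMul : A) : Q) * aq ^ n := by
    intro n
    induction n with
    | zero => intro y; simp
    | succ n ih =>
      intro y
      rw [pow_succ']
      show (((f ((f ^ n) y)).toMul : A) : Q) = _
      rw [hfapp, toMul_ofMul, hσcoe, ih y]
      rw [pow_succ aq, pow_succ (aq⁻¹)]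
      group
  -- exponent p
  have hpx : ∀ y : Additive A, p • y = 0 := by
    intro y
    obtain ⟨h', hh', hval⟩ := (y.toMul).2
    have h1 : ((y.toMul : A) : Q) ^ p = 1 := by
      rw [← hval, ← map_pow]
      exact (QuotientGroup.eq_one_iff _).mpr (helemp h' hh')
    have h2 : (y.toMul) ^ p = 1 := Subtype.ext (by push_cast; rw [h1])
    have h3 : Additive.ofMul ((y.toMul) ^ p) = p • y := rfl
    rw [← ofMul_toMul (p • y), ← h3, h2]
    rfl
  -- Engel condition
  have hEng : ∀ y : Additive A, ((f - 1) ^ c) y = 0 := by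
    intro y
    obtain ⟨h', hh', hval⟩ := (y.toMul).2
    have h1 : (((((f - 1) ^ c) y).toMul : A) : Q) = 1 := by
      rw [hdpow c y, ← hval, haq, ← map_engelComm, hEngel h' a, map_one]
    have h2 : (((f - 1) ^ c) y).toMul = 1 := Subtype.ext (by rw [h1]; rfl)
    rw [← ofMul_toMul (((f - 1) ^ c) y), h2]
    rfl
  -- apply the key lemma
  set x0 : A := ⟨π h, ⟨h, hh, rfl⟩⟩ with hx0
  have hkey := key_end hp hpx f hr2 hEng (Additive.ofMul x0)
  have hfin := hpow (p ^ r) (Additive.ofMul x0)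
  rw [hkey] at hfin
  rw [toMul_ofMul] at hfin
  have hconj : aq⁻¹ ^ (p ^ r) * (π h) * aq ^ (p ^ r) = π h := hfin.symm
  rw [← QuotientGroup.eq_one_iff (G := G) (N := K)]
  show π (gcomm h (a ^ p ^ r)) = 1
  rw [map_gcomm, map_pow]
  unfold gcomm
  rw [← haq]
  calc (π h)⁻¹ * (aq ^ p ^ r)⁻¹ * π h * aq ^ p ^ r
      = (π h)⁻¹ * (aq⁻¹ ^ (p ^ r) * (π h) * aq ^ (p ^ r)) := by group
    _ = (π h)⁻¹ * π h := by rw [hconj]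
    _ = 1 := by group
end

section
/- Let G be a nilpotent group of class at most 5 and of exponent dividing 8, generated by two elements x, y. Then [x⁴, y, x⁴, y] = 1. -/
namespace HPLaux

variable {G : Type*} [Group G]
open scoped commutatorElement

lemma gcomm_eq_commutator (a b : G) : gcomm a b = ⁅a⁻¹, b⁻¹⁆ := by
  simp [gcomm, commutatorElement_def, mul_assoc]

lemma gcomm_mul_left (a b c : G) :
    gcomm (a * b) c = gcomm a c * gcomm (gcomm a c) b * gcomm b c := by
  simp only [gcomm]; group

lemma gcomm_mul_right (a b c : G) :
    gcomm a (b * c) = gcomm a c * gcomm a b * gcomm (gcomm a b) c := by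
  simp only [gcomm]; group

lemma gcomm_one_left (b : G) : gcomm 1 b = 1 := by simp [gcomm]
lemma gcomm_one_right (a : G) : gcomm a 1 = 1 := by simp [gcomm]

lemma mul_comm_of_gcomm {a b : G} (h : gcomm a b = 1) : a * b = b * a := by
  have := congrArg (fun t => b * a * t) h
  simpa [gcomm, mul_assoc] using this

lemma hba_aux (a b : G) (t : G) : b * (a * t) = a * (b * (gcomm b a * t)) := by
  simp only [gcomm]; group

lemma comm_assoc {a b : G} (h : a * b = b * a) (t : G) : a * (b * t) = b * (a * t) := by
  rw [← mul_assoc, h, mul_assoc]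

lemma swap_assoc {p a ζ : G} (h : p * a = a * p * ζ) (t : G) :
    p * (a * t) = a * (p * (ζ * t)) := by
  rw [← mul_assoc, h, mul_assoc, mul_assoc]

lemma pow_mul_assoc (a : G) (m n : ℕ) (t : G) : a ^ m * (a ^ n * t) = a ^ (m + n) * t := by
  rw [← mul_assoc, ← pow_add]

lemma succ_pow_assoc (a : G) (n : ℕ) (t : G) : a * (a ^ n * t) = a ^ (n + 1) * t := by
  rw [← mul_assoc, ← pow_succ']

lemma pow_succ_assoc (a : G) (n : ℕ) (t : G) : a ^ n * (a * t) = a ^ (n + 1) * t := by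
  rw [← mul_assoc, ← pow_succ]

lemma lcs_succ' (n : ℕ) :
    (⊤ : Subgroup G).lowerCentralSeries (n + 1) = ⁅(⊤ : Subgroup G).lowerCentralSeries n, ⊤⁆ := rfl

/-- generalized three subgroups lemma -/
lemma three_subgroups {H₁ H₂ H₃ N : Subgroup G} [N.Normal]
    (h1 : ⁅⁅H₂, H₃⁆, H₁⁆ ≤ N) (h2 : ⁅⁅H₃, H₁⁆, H₂⁆ ≤ N) : ⁅⁅H₁, H₂⁆, H₃⁆ ≤ N := by
  let π := QuotientGroup.mk' N
  have key : ∀ {A B C : Subgroup G}, ⁅⁅A, B⁆, C⁆ ≤ N ↔ ⁅⁅A.map π, B.map π⁆, C.map π⁆ = ⊥ := by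
    intro A B C
    rw [← Subgroup.map_commutator, ← Subgroup.map_commutator, Subgroup.map_eq_bot_iff,
      QuotientGroup.ker_mk']
  rw [key]
  exact Subgroup.commutator_commutator_eq_bot_of_rotate (key.mp h1) (key.mp h2)

lemma lcs_comm_le : ∀ (j i : ℕ),
    ⁅(⊤ : Subgroup G).lowerCentralSeries i, (⊤ : Subgroup G).lowerCentralSeries j⁆ ≤ (⊤ : Subgroup G).lowerCentralSeries (i + j + 1) := by
  intro j
  induction j with
  | zero =>
    intro i
    rw [Subgroup.lowerCentralSeries_zero, ← lcs_succ']
  | succ j ih =>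
    intro i
    rw [Subgroup.commutator_comm, lcs_succ' j]
    apply three_subgroups
    · rw [Subgroup.commutator_comm ⊤, ← lcs_succ']
      calc ⁅(⊤ : Subgroup G).lowerCentralSeries (i+1), (⊤ : Subgroup G).lowerCentralSeries j⁆
          ≤ (⊤ : Subgroup G).lowerCentralSeries (i + 1 + j + 1) := ih (i+1)
        _ ≤ (⊤ : Subgroup G).lowerCentralSeries (i + (j+1) + 1) := by
            apply (⊤ : Subgroup G).lowerCentralSeries_antitone; omega
    · calc ⁅⁅(⊤ : Subgroup G).lowerCentralSeries i, (⊤ : Subgroup G).lowerCentralSeries j⁆, ⊤⁆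
          ≤ ⁅(⊤ : Subgroup G).lowerCentralSeries (i + j + 1), ⊤⁆ :=
            Subgroup.commutator_mono (ih i) le_rfl
        _ = (⊤ : Subgroup G).lowerCentralSeries (i + j + 2) := (lcs_succ' (i+j+1)).symm
        _ ≤ (⊤ : Subgroup G).lowerCentralSeries (i + (j+1) + 1) := by
            apply (⊤ : Subgroup G).lowerCentralSeries_antitone; omega

lemma memL0 (g : G) : g ∈ (⊤ : Subgroup G).lowerCentralSeries 0 := Subgroup.mem_top g

lemma gcomm_mem {i j : ℕ} {a b : G} (ha : a ∈ (⊤ : Subgroup G).lowerCentralSeries i)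
    (hb : b ∈ (⊤ : Subgroup G).lowerCentralSeries j) : gcomm a b ∈ (⊤ : Subgroup G).lowerCentralSeries (i + j + 1) := by
  rw [gcomm_eq_commutator]
  exact lcs_comm_le j i (Subgroup.commutator_mem_commutator (inv_mem ha) (inv_mem hb))

lemma gcomm_mem' {i j k : ℕ} (hk : i + j + 1 = k) {a b : G}
    (ha : a ∈ (⊤ : Subgroup G).lowerCentralSeries i) (hb : b ∈ (⊤ : Subgroup G).lowerCentralSeries j) :
    gcomm a b ∈ (⊤ : Subgroup G).lowerCentralSeries k :=
  hk ▸ gcomm_mem ha hb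

lemma gcomm_pow_left_exact {a b : G} (H : ∀ n : ℕ, gcomm (gcomm a b) (a ^ n) = 1) (k : ℕ) :
    gcomm (a ^ k) b = gcomm a b ^ k := by
  induction k with
  | zero => simp [gcomm_one_left]
  | succ k ih =>
    rw [pow_succ' a k, gcomm_mul_left, H k, mul_one, ih, ← pow_succ']

section WithClass
variable (hclass : (⊤ : Subgroup G).lowerCentralSeries 5 = ⊥)
include hclass

lemma gcomm_eq_one {i j : ℕ} {a b : G} (hij : 4 ≤ i + j)
    (ha : a ∈ (⊤ : Subgroup G).lowerCentralSeries i) (hb : b ∈ (⊤ : Subgroup G).lowerCentralSeries j) : gcomm a b = 1 := by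
  have h := gcomm_mem ha hb
  have h5 : (⊤ : Subgroup G).lowerCentralSeries (i + j + 1) ≤ (⊤ : Subgroup G).lowerCentralSeries 5 :=
    (⊤ : Subgroup G).lowerCentralSeries_antitone (by omega)
  rw [hclass] at h5
  simpa using h5 h

lemma comm_of' {i j : ℕ} {a b : G} (hij : 4 ≤ i + j)
    (ha : a ∈ (⊤ : Subgroup G).lowerCentralSeries i) (hb : b ∈ (⊤ : Subgroup G).lowerCentralSeries j) : a * b = b * a :=
  mul_comm_of_gcomm (gcomm_eq_one hclass hij ha hb)

lemma central_of_L4 {z : G} (hz : z ∈ (⊤ : Subgroup G).lowerCentralSeries 4) (g : G) : z * g = g * z :=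
  comm_of' hclass (i := 4) (j := 0) (by omega) hz (memL0 g)

lemma gcomm_L4_left {z : G} (hz : z ∈ (⊤ : Subgroup G).lowerCentralSeries 4) (g : G) : gcomm z g = 1 :=
  gcomm_eq_one hclass (i := 4) (j := 0) (by omega) hz (memL0 g)

lemma gcomm_L4_right {z : G} (hz : z ∈ (⊤ : Subgroup G).lowerCentralSeries 4) (g : G) : gcomm g z = 1 :=
  gcomm_eq_one hclass (i := 0) (j := 4) (by omega) (memL0 g) hz

lemma gcomm_pow_left_mod {a b : G}
    (H : ∀ n : ℕ, gcomm (gcomm a b) (a ^ n) ∈ (⊤ : Subgroup G).lowerCentralSeries 4) (k : ℕ) :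
    ∃ ζ ∈ (⊤ : Subgroup G).lowerCentralSeries 4, gcomm (a ^ k) b = gcomm a b ^ k * ζ := by
  induction k with
  | zero => exact ⟨1, one_mem _, by simp [gcomm_one_left]⟩
  | succ k ih =>
    obtain ⟨ζ, hζ, hk⟩ := ih
    refine ⟨gcomm (gcomm a b) (a ^ k) * ζ, mul_mem (H k) hζ, ?_⟩
    rw [pow_succ' a k, gcomm_mul_left, hk, pow_succ' (gcomm a b) k]
    simp only [mul_assoc, comm_assoc (central_of_L4 hclass (H k) (gcomm a b ^ k))]

lemma lemE (x : G) {d : G} (hd : d ∈ (⊤ : Subgroup G).lowerCentralSeries 2) (k : ℕ) :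
    ∃ ξ ∈ (⊤ : Subgroup G).lowerCentralSeries 4, gcomm d (x ^ k) = gcomm d x ^ k * ξ := by
  have he : gcomm d x ∈ (⊤ : Subgroup G).lowerCentralSeries 3 := gcomm_mem' (by norm_num) hd (memL0 x)
  induction k with
  | zero => exact ⟨1, one_mem _, by simp [gcomm_one_right]⟩
  | succ k ih =>
    obtain ⟨ξ, hξ, hk⟩ := ih
    have hτ : gcomm (gcomm d x) (x ^ k) ∈ (⊤ : Subgroup G).lowerCentralSeries 4 :=
      gcomm_mem' (by norm_num) he (memL0 _)
    refine ⟨ξ * gcomm (gcomm d x) (x ^ k), mul_mem hξ hτ, ?_⟩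
    rw [pow_succ' x k, gcomm_mul_right, hk, pow_succ (gcomm d x) k]
    simp only [mul_assoc, comm_assoc (central_of_L4 hclass hξ (gcomm d x))]

lemma lemD (x : G) {c : G} (hc : c ∈ (⊤ : Subgroup G).lowerCentralSeries 1) (k : ℕ) :
    ∃ ξ ∈ (⊤ : Subgroup G).lowerCentralSeries 4,
      gcomm c (x ^ k) = gcomm c x ^ k * gcomm (gcomm c x) x ^ k.choose 2 * ξ := by
  have hd : gcomm c x ∈ (⊤ : Subgroup G).lowerCentralSeries 2 := gcomm_mem' (by norm_num) hc (memL0 x)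
  have he : gcomm (gcomm c x) x ∈ (⊤ : Subgroup G).lowerCentralSeries 3 :=
    gcomm_mem' (by norm_num) hd (memL0 x)
  have hed : gcomm (gcomm c x) x * gcomm c x = gcomm c x * gcomm (gcomm c x) x :=
    comm_of' hclass (i := 3) (j := 2) (by omega) he hd
  induction k with
  | zero => exact ⟨1, one_mem _, by simp [gcomm_one_right]⟩
  | succ k ih =>
    obtain ⟨ξ, hξ, hk⟩ := ih
    obtain ⟨ξ', hξ', hE⟩ := lemE hclass x hd k
    refine ⟨ξ * ξ', mul_mem hξ hξ', ?_⟩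
    rw [pow_succ' x k, gcomm_mul_right, hk, hE]
    have hch : (k+1).choose 2 = k.choose 2 + k := by
      rw [Nat.choose_succ_succ', Nat.choose_one_right]
      norm_num [Nat.add_comm]
    rw [hch]
    have hepow : gcomm (gcomm c x) x ^ k.choose 2 * gcomm c x
        = gcomm c x * gcomm (gcomm c x) x ^ k.choose 2 :=
      (((commute_iff_eq _ _).mpr hed).pow_left (k.choose 2)).eq
    simp only [mul_assoc, comm_assoc (central_of_L4 hclass hξ (gcomm c x)),
      comm_assoc (central_of_L4 hclass hξ (gcomm (gcomm c x) x ^ k)),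
      comm_assoc hepow, pow_succ_assoc, pow_mul_assoc]

lemma swap_pow {a b : G} (hρ : gcomm b a ∈ (⊤ : Subgroup G).lowerCentralSeries 4) (m n : ℕ) :
    ∃ ζ ∈ (⊤ : Subgroup G).lowerCentralSeries 4, b ^ m * a ^ n = a ^ n * b ^ m * ζ := by
  have hρc : ∀ (j : ℕ) (g : G), (gcomm b a) ^ j * g = g * (gcomm b a) ^ j := fun j g =>
    (((commute_iff_eq _ _).mpr (central_of_L4 hclass hρ g)).pow_left j).eq
  have sa : ∀ n : ℕ, b * a ^ n = a ^ n * (b * (gcomm b a) ^ n) := by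
    intro n
    induction n with
    | zero => simp
    | succ n ih =>
      rw [pow_succ a n, ← mul_assoc, ih, pow_succ' (gcomm b a) n]
      simp only [mul_assoc, hρc n a, hba_aux a b, comm_assoc (hρc n a)]
  have sb : ∀ m : ℕ, b ^ m * a ^ n = a ^ n * (b ^ m * (gcomm b a) ^ (m * n)) := by
    intro m
    induction m with
    | zero => simp
    | succ m ih =>
      rw [pow_succ' b m, mul_assoc, ih, Nat.succ_mul, pow_add]
      rw [← mul_assoc b (a ^ n), sa n]
      simp only [mul_assoc, comm_assoc (hρc n (b ^ m)), ← pow_add]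
      rw [Nat.add_comm n (m * n)]
  exact ⟨(gcomm b a) ^ (m * n), pow_mem hρ _, by rw [sb m, mul_assoc]⟩

lemma lemC (x y : G) (k : ℕ) :
    ∃ w ∈ (⊤ : Subgroup G).lowerCentralSeries 3,
      gcomm (x ^ k) y = gcomm x y ^ k * gcomm (gcomm x y) x ^ k.choose 2 * w := by
  have hc : gcomm x y ∈ (⊤ : Subgroup G).lowerCentralSeries 1 := gcomm_mem' (by norm_num) (memL0 x) (memL0 y)
  have hd : gcomm (gcomm x y) x ∈ (⊤ : Subgroup G).lowerCentralSeries 2 :=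
    gcomm_mem' (by norm_num) hc (memL0 x)
  have he : gcomm (gcomm (gcomm x y) x) x ∈ (⊤ : Subgroup G).lowerCentralSeries 3 :=
    gcomm_mem' (by norm_num) hd (memL0 x)
  have hec : Commute (gcomm (gcomm (gcomm x y) x) x) (gcomm x y) :=
    (commute_iff_eq _ _).mpr (comm_of' hclass (i := 3) (j := 1) (by omega) he hc)
  have hed : Commute (gcomm (gcomm (gcomm x y) x) x) (gcomm (gcomm x y) x) :=
    (commute_iff_eq _ _).mpr (comm_of' hclass (i := 3) (j := 2) (by omega) he hd)
  have hρ : gcomm (gcomm (gcomm x y) x) (gcomm x y) ∈ (⊤ : Subgroup G).lowerCentralSeries 4 :=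
    gcomm_mem' (by norm_num) hd hc
  induction k with
  | zero => exact ⟨1, one_mem _, by simp [gcomm_one_left]⟩
  | succ k ih =>
    obtain ⟨w, hw, hk⟩ := ih
    obtain ⟨ξ, hξ, hD⟩ := lemD hclass x hc k
    obtain ⟨ζ, hζ, hS⟩ := swap_pow hclass hρ k k
    refine ⟨ζ * (gcomm (gcomm (gcomm x y) x) x ^ k.choose 2 * (ξ * w)),
      mul_mem ((⊤ : Subgroup G).lowerCentralSeries_antitone (by omega : 3 ≤ 4) hζ)
        (mul_mem (pow_mem he _)
          (mul_mem ((⊤ : Subgroup G).lowerCentralSeries_antitone (by omega : 3 ≤ 4) hξ) hw)), ?_⟩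
    rw [pow_succ' x k, gcomm_mul_left, hk, hD]
    have hch : (k+1).choose 2 = k + k.choose 2 := by
      rw [Nat.choose_succ_succ', Nat.choose_one_right]
    rw [hch]
    simp only [mul_assoc,
      comm_assoc (central_of_L4 hclass hξ (gcomm x y ^ k)),
      comm_assoc (central_of_L4 hclass hξ (gcomm (gcomm x y) x ^ k.choose 2)),
      comm_assoc ((hec.pow_pow (k.choose 2) k).eq),
      comm_assoc ((hed.pow_pow (k.choose 2) (k.choose 2)).eq),
      swap_assoc hS,
      comm_assoc (central_of_L4 hclass hζ (gcomm (gcomm x y) x ^ k.choose 2)),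
      succ_pow_assoc, pow_mul_assoc]

end WithClass
end HPLaux

open HPLaux in
theorem comm_pow_four_eq_one_of_class_five_exponent_eight
    {G : Type*} [Group G] (x y : G)
    (hgen : Subgroup.closure ({x, y} : Set G) = ⊤)
    (hclass : (⊤ : Subgroup G).lowerCentralSeries 5 = ⊥)
    (hexp : ∀ g : G, g ^ 8 = 1) :
    gcomm (gcomm (gcomm (x ^ 4) y) (x ^ 4)) y = 1 := by
  clear hgen
  have hc1 : gcomm x y ∈ (⊤ : Subgroup G).lowerCentralSeries 1 :=
    gcomm_mem' (by norm_num) (memL0 x) (memL0 y)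
  have hd2 : gcomm (gcomm x y) x ∈ (⊤ : Subgroup G).lowerCentralSeries 2 :=
    gcomm_mem' (by norm_num) hc1 (memL0 x)
  have he3 : gcomm (gcomm (gcomm x y) x) x ∈ (⊤ : Subgroup G).lowerCentralSeries 3 :=
    gcomm_mem' (by norm_num) hd2 (memL0 x)
  obtain ⟨w, hw3, h1⟩ := lemC hclass x y 4
  rw [show (4:ℕ).choose 2 = 6 from rfl] at h1
  obtain ⟨ζ₁, hζ₁, h2⟩ := gcomm_pow_left_mod hclass (a := gcomm x y) (b := x ^ 4)
    (fun n => gcomm_mem' (k := 4) (by norm_num)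
      (gcomm_mem' (k := 2) (by norm_num) hc1 (memL0 (x ^ 4))) (pow_mem hc1 n)) 4
  obtain ⟨ξ₁, hξ₁, h3⟩ := lemD hclass x hc1 4
  rw [show (4:ℕ).choose 2 = 6 from rfl] at h3
  have h4 : gcomm (gcomm (gcomm x y) x ^ 6) (x ^ 4)
      = gcomm (gcomm (gcomm x y) x) (x ^ 4) ^ 6 :=
    gcomm_pow_left_exact
      (fun n => gcomm_eq_one hclass (i := 3) (j := 2) (by omega)
        (gcomm_mem' (by norm_num) hd2 (memL0 (x ^ 4))) (pow_mem hd2 n)) 6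
  obtain ⟨ξ₂, hξ₂, h5⟩ := lemE hclass x hd2 4
  have hT12 : gcomm (gcomm (gcomm x y ^ 4) (x ^ 4)) (gcomm (gcomm x y) x ^ 6) = 1 :=
    gcomm_eq_one hclass (i := 2) (j := 2) (by omega)
      (gcomm_mem' (by norm_num) (pow_mem hc1 4) (memL0 _)) (pow_mem hd2 6)
  have hcd1 : gcomm x y ^ 4 * gcomm (gcomm x y) x ^ 6 ∈ (⊤ : Subgroup G).lowerCentralSeries 1 :=
    mul_mem (pow_mem hc1 4)
      (pow_mem ((⊤ : Subgroup G).lowerCentralSeries_antitone (by omega : 1 ≤ 2) hd2) 6)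
  have hT2 : gcomm (gcomm (gcomm x y ^ 4 * gcomm (gcomm x y) x ^ 6) (x ^ 4)) w = 1 :=
    gcomm_eq_one hclass (i := 2) (j := 3) (by omega)
      (gcomm_mem' (by norm_num) hcd1 (memL0 _)) hw3
  have hT3 : gcomm w (x ^ 4) ∈ (⊤ : Subgroup G).lowerCentralSeries 4 :=
    gcomm_mem' (by norm_num) hw3 (memL0 _)
  -- introduce short names (folds in all hypotheses and goal)
  set c := gcomm x y with hcdef
  set d := gcomm c x with hddef
  set e := gcomm d x with hedef
  have hde : Commute d e :=
    (commute_iff_eq _ _).mpr (comm_of' hclass (i := 2) (j := 3) (by omega) hd2 he3)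
  have h6 : (d ^ 4 * e ^ 6 * ξ₁) ^ 4 = d ^ 16 * e ^ 24 * ξ₁ ^ 4 := by
    rw [((commute_iff_eq _ _).mpr
      (central_of_L4 hclass hξ₁ (d ^ 4 * e ^ 6)).symm).mul_pow 4]
    rw [(hde.pow_pow 4 6).mul_pow 4, ← pow_mul, ← pow_mul]
  have h7 : (e ^ 4 * ξ₂) ^ 6 = e ^ 24 * ξ₂ ^ 6 := by
    rw [((commute_iff_eq _ _).mpr (central_of_L4 hclass hξ₂ (e ^ 4)).symm).mul_pow 6,
      ← pow_mul]
  have hB : gcomm (gcomm (x ^ 4) y) (x ^ 4)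
      = d ^ 16 * e ^ 48 * (ξ₁ ^ 4 * (ζ₁ * (ξ₂ ^ 6 * gcomm w (x ^ 4)))) := by
    calc gcomm (gcomm (x ^ 4) y) (x ^ 4)
        = gcomm (c ^ 4 * d ^ 6 * w) (x ^ 4) := by rw [h1]
      _ = gcomm (c ^ 4 * d ^ 6) (x ^ 4) * gcomm (gcomm (c ^ 4 * d ^ 6) (x ^ 4)) w
            * gcomm w (x ^ 4) := gcomm_mul_left _ _ _
      _ = gcomm (c ^ 4 * d ^ 6) (x ^ 4) * gcomm w (x ^ 4) := by
            rw [hT2, mul_one]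
      _ = gcomm (c ^ 4) (x ^ 4) * gcomm (gcomm (c ^ 4) (x ^ 4)) (d ^ 6)
            * gcomm (d ^ 6) (x ^ 4) * gcomm w (x ^ 4) := by rw [gcomm_mul_left]
      _ = gcomm (c ^ 4) (x ^ 4) * gcomm (d ^ 6) (x ^ 4) * gcomm w (x ^ 4) := by
            rw [hT12, mul_one]
      _ = (d ^ 4 * e ^ 6 * ξ₁) ^ 4 * ζ₁ * (e ^ 4 * ξ₂) ^ 6 * gcomm w (x ^ 4) := by
            rw [h2, h3, h4, h5]
      _ = d ^ 16 * e ^ 24 * ξ₁ ^ 4 * ζ₁ * (e ^ 24 * ξ₂ ^ 6) * gcomm w (x ^ 4) := by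
            rw [h6, h7]
      _ = d ^ 16 * e ^ 48 * (ξ₁ ^ 4 * (ζ₁ * (ξ₂ ^ 6 * gcomm w (x ^ 4)))) := by
            simp only [mul_assoc,
              comm_assoc (central_of_L4 hclass (pow_mem hξ₁ 4) (e ^ 24)),
              comm_assoc (central_of_L4 hclass hζ₁ (e ^ 24)),
              pow_mul_assoc e]
  have hZ4 : ξ₁ ^ 4 * (ζ₁ * (ξ₂ ^ 6 * gcomm w (x ^ 4))) ∈ (⊤ : Subgroup G).lowerCentralSeries 4 :=
    mul_mem (pow_mem hξ₁ 4) (mul_mem hζ₁ (mul_mem (pow_mem hξ₂ 6) hT3))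
  have h31 : gcomm (d ^ 16) y = 1 := by
    rw [gcomm_pow_left_exact
      (fun n => gcomm_eq_one hclass (i := 3) (j := 2) (by omega)
        (gcomm_mem' (by norm_num) hd2 (memL0 y)) (pow_mem hd2 n)) 16,
      show (16:ℕ) = 8 * 2 from rfl, pow_mul, hexp, one_pow]
  have h32 : gcomm (e ^ 48) y = 1 := by
    rw [gcomm_pow_left_exact
      (fun n => gcomm_L4_left hclass
        (gcomm_mem' (by norm_num) he3 (memL0 y)) (e ^ n)) 48,
      show (48:ℕ) = 8 * 6 from rfl, pow_mul, hexp, one_pow]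
  have h30 : gcomm (d ^ 16 * e ^ 48) y = 1 := by
    rw [gcomm_mul_left, h31, gcomm_one_left, h32]; simp
  rw [hB, gcomm_mul_left, h30, gcomm_one_left, gcomm_L4_left hclass hZ4]
  simp
end
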